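/- arXiv:2004.09238 — 11 statements merged into one kernel-verified Lean document; each statement's English description precedes it below -/
import Mathlib

section
/- Let β,γ ∈ (0,1) with β ≠ γ, and let λ = (1−β)/(1−γ). Let T be the graph on vertices {ρ,a,b,c} with edges {ρ,a},{a,b},{a,c},{b,c} (a triangle a,b,c with a pendant root ρ attached to a). Then the effective field R of T equals (1 + γλr)/(β + λr) where r = (β + 2λγ + λ²γ³)/(β³ + 2λβ + λ²γ), and it satisfies R ≠ 1 and γ < R < 1/β. -/
/-!
Conditioning on the spin of `a`, the root sees the triangle only through the triangle's
effective field `r = N / D` at `a`, so `R` is the one-edge tree recursion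
`(1 + γλr) / (β + λr)`. For `λr > 0` this lies strictly between `γ` and `1/β` as soon as
`βγ < 1`, and when `λ(1 - γ) = 1 - β` it equals `1` only at `r = 1`; but
`D - N = (1 - β)² (β - γ) ≠ 0`.
-/

open Finset

attribute [local instance] Classical.propDecidable

noncomputable section

/-- The number of vertices with spin 1 (`true`) in the configuration `σ`. -/
def confOnes {V : Type*} [Fintype V] (σ : V → Bool) : ℕ :=
  (Finset.univ.filter fun v => σ v = true).card

/-- The number of edges of `G` whose two endpoints both receive spin `b` under `σ`. -/
def monoCount {V : Type*} [Fintype V] [DecidableEq V] (G : SimpleGraph V) (b : Bool)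
    (σ : V → Bool) : ℕ :=
  (G.edgeFinset.filter fun e => ∀ v ∈ e, σ v = b).card

/-- The Gibbs weight `λ^{|σ|} β^{m₀(σ)} γ^{m₁(σ)}` of a configuration `σ`
(with the convention `0^0 = 1`, which holds for `Monoid.npow`). -/
def gWeight {V : Type*} [Fintype V] [DecidableEq V] (G : SimpleGraph V) (β γ lam : ℝ)
    (σ : V → Bool) : ℝ :=
  lam ^ confOnes σ * β ^ monoCount G false σ * γ ^ monoCount G true σ

/-- The total Gibbs weight of configurations assigning spin `b` to the root `ρ`. -/
def Zcond {V : Type*} [Fintype V] [DecidableEq V] (G : SimpleGraph V) (β γ lam : ℝ)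
    (ρ : V) (b : Bool) : ℝ :=
  ∑ σ : V → Bool, if σ ρ = b then gWeight G β γ lam σ else 0

/-- The effective field `(1/λ)·μ(σ(ρ)=1)/μ(σ(ρ)=0)` of the rooted graph `(G, ρ)`;
since `μ` assigns probabilities proportional to the Gibbs weights, this ratio of conditional
probabilities equals the corresponding ratio of total weights. -/
def effField {V : Type*} [Fintype V] [DecidableEq V] (G : SimpleGraph V) (β γ lam : ℝ)
    (ρ : V) : ℝ :=
  Zcond G β γ lam ρ true / (lam * Zcond G β γ lam ρ false)

/-- The conditional expectation `E_{σ∼μ}[|σ| | σ(ρ) = b]`, expressed via Gibbs weights. -/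
def condMag {V : Type*} [Fintype V] [DecidableEq V] (G : SimpleGraph V) (β γ lam : ℝ)
    (ρ : V) (b : Bool) : ℝ :=
  (∑ σ : V → Bool, if σ ρ = b then (confOnes σ : ℝ) * gWeight G β γ lam σ else 0) /
    Zcond G β γ lam ρ b

/-- The magnetization gap `E[|σ| | σ(ρ)=1] − E[|σ| | σ(ρ)=0]` of the rooted graph `(G, ρ)`. -/
def magGap {V : Type*} [Fintype V] [DecidableEq V] (G : SimpleGraph V) (β γ lam : ℝ)
    (ρ : V) : ℝ :=
  condMag G β γ lam ρ true - condMag G β γ lam ρ false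

/-- `(β, γ)` is antiferromagnetic: both are nonnegative, `βγ < 1`, and not both are zero. -/
def Antiferro (β γ : ℝ) : Prop :=
  0 ≤ β ∧ 0 ≤ γ ∧ β * γ < 1 ∧ (β ≠ 0 ∨ γ ≠ 0)

/-- The graph on vertices `{ρ,a,b,c} = {0,1,2,3}` consisting of the triangle `a,b,c`
with a pendant root `ρ` attached to `a`. -/
def pendantTriangle : SimpleGraph (Fin 4) :=
  SimpleGraph.fromEdgeSet {s(0, 1), s(1, 2), s(1, 3), s(2, 3)}

theorem Fintype.sum_fun_fin_succ {α M : Type*} [Fintype α] [AddCommMonoid M] {n : ℕ}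
    (f : (Fin (n + 1) → α) → M) :
    ∑ σ, f σ = ∑ a, ∑ τ : Fin n → α, f (Fin.cons a τ) := by
  rw [← (Fin.consEquiv fun _ => α).sum_comp, Fintype.sum_prod_type]
  rfl

theorem Fintype.sum_fun_fin_four {α M : Type*} [Fintype α] [AddCommMonoid M]
    (f : (Fin 4 → α) → M) : ∑ σ, f σ = ∑ a, ∑ b, ∑ c, ∑ d, f ![a, b, c, d] := by
  simp only [Fintype.sum_fun_fin_succ, Fintype.sum_unique]
  rfl

theorem confOnes_fin_four (σ : Fin 4 → Bool) :
    confOnes σ = (if σ 0 then 1 else 0) + (if σ 1 then 1 else 0)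
      + (if σ 2 then 1 else 0) + (if σ 3 then 1 else 0) := by
  rw [confOnes, card_filter, Fin.sum_univ_four]

theorem pendantTriangle_edgeFinset :
    pendantTriangle.edgeFinset = {s(0, 1), s(1, 2), s(1, 3), s(2, 3)} := by
  ext e
  induction e using Sym2.ind with
  | _ x y =>
    rw [SimpleGraph.mem_edgeFinset]
    simp only [SimpleGraph.mem_edgeSet, pendantTriangle,
      SimpleGraph.fromEdgeSet_adj, Set.mem_insert_iff, Set.mem_singleton_iff, mem_insert,
      mem_singleton]
    revert x y
    decide

theorem monoCount_pendantTriangle (b : Bool) (σ : Fin 4 → Bool) :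
    monoCount pendantTriangle b σ =
      (if σ 0 = b ∧ σ 1 = b then 1 else 0) + (if σ 1 = b ∧ σ 2 = b then 1 else 0)
        + (if σ 1 = b ∧ σ 3 = b then 1 else 0) + (if σ 2 = b ∧ σ 3 = b then 1 else 0) := by
  rw [monoCount, pendantTriangle_edgeFinset, card_filter, sum_insert (by decide),
    sum_insert (by decide), sum_insert (by decide), sum_singleton]
  simp only [Sym2.ball]
  ring

/-- `triangleZ β γ λ b` is the total weight of the triangle `a, b, c` with `a` pinned to spin
`b`, the factor `λ` of `a` itself omitted; so `triangleZ β γ λ true / triangleZ β γ λ false`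
is the effective field of the triangle rooted at `a`. -/
def triangleZ (β γ lam : ℝ) : Bool → ℝ
  | false => β ^ 3 + 2 * lam * β + lam ^ 2 * γ
  | true => β + 2 * lam * γ + lam ^ 2 * γ ^ 3

theorem Zcond_pendantTriangle_false (β γ lam : ℝ) :
    Zcond pendantTriangle β γ lam 0 false =
      β * triangleZ β γ lam false + lam * triangleZ β γ lam true := by
  simp only [Zcond, Fintype.sum_fun_fin_four, Fintype.sum_bool, gWeight, confOnes_fin_four,
    monoCount_pendantTriangle, triangleZ, Matrix.cons_val]
  norm_num
  ring

theorem Zcond_pendantTriangle_true (β γ lam : ℝ) :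
    Zcond pendantTriangle β γ lam 0 true =
      lam * (triangleZ β γ lam false + lam * γ * triangleZ β γ lam true) := by
  simp only [Zcond, Fintype.sum_fun_fin_four, Fintype.sum_bool, gWeight, confOnes_fin_four,
    monoCount_pendantTriangle, triangleZ, Matrix.cons_val]
  norm_num
  ring

theorem triangleZ_false_sub_true {β γ lam : ℝ} (hlam : lam * (1 - γ) = 1 - β) :
    triangleZ β γ lam false - triangleZ β γ lam true = (1 - β) ^ 2 * (β - γ) := by
  simp only [triangleZ]
  linear_combination (lam * γ * (1 + γ) + 2 - (1 - β) * (2 + γ)) * hlam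

/-- The effective field at a root joined by a single edge to the root of a graph whose
effective field is `r`. -/
def pendantField (β γ lam r : ℝ) : ℝ :=
  (1 + γ * lam * r) / (β + lam * r)

theorem effField_pendantTriangle {β γ lam : ℝ} (hlam : lam ≠ 0)
    (hZ : triangleZ β γ lam false ≠ 0) :
    effField pendantTriangle β γ lam 0 =
      pendantField β γ lam (triangleZ β γ lam true / triangleZ β γ lam false) := by
  rw [effField, pendantField, Zcond_pendantTriangle_true, Zcond_pendantTriangle_false]
  field_simp

section pendantField

variable {β γ lam r : ℝ}

theorem pendantField_ne_one (hlam : lam * (1 - γ) = 1 - β) (hβ : β ≠ 1) (hr : r ≠ 1) :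
    pendantField β γ lam r ≠ 1 := by
  intro h
  have hden : β + lam * r ≠ 0 := by
    rintro h0
    simp [pendantField, h0] at h
  rw [pendantField, div_eq_one_iff_eq hden] at h
  have : (1 - β) * (r - 1) = 0 := by linear_combination -r * hlam - h
  rcases mul_eq_zero.mp this with h | h
  · exact hβ (by linarith)
  · exact hr (by linarith)

theorem lt_pendantField (hβγ : β * γ < 1) (hden : 0 < β + lam * r) :
    γ < pendantField β γ lam r := by
  rw [pendantField, lt_div_iff₀ hden]
  linarith

theorem pendantField_lt_inv (hβ : 0 < β) (hβγ : β * γ < 1) (hlr : 0 < lam * r) :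
    pendantField β γ lam r < 1 / β := by
  rw [pendantField, div_lt_div_iff₀ (by positivity) hβ]
  nlinarith

end pendantField

/-- Let `β,γ ∈ (0,1)` with `β ≠ γ`, and let `λ = (1−β)/(1−γ)`.  For the
triangle with a pendant root, the effective field `R` equals `(1 + γλr)/(β + λr)` with
`r = (β + 2λγ + λ²γ³)/(β³ + 2λβ + λ²γ)`, and it satisfies `R ≠ 1` and `γ < R < 1/β`. -/
theorem pendantTriangle_effField (β γ lam r : ℝ) (hβ0 : 0 < β) (hβ1 : β < 1) (hγ0 : 0 < γ)
    (hγ1 : γ < 1) (hβγ : β ≠ γ) (hlam : lam = (1 - β) / (1 - γ))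
    (hr : r = (β + 2 * lam * γ + lam ^ 2 * γ ^ 3) / (β ^ 3 + 2 * lam * β + lam ^ 2 * γ)) :
    effField pendantTriangle β γ lam 0 = (1 + γ * lam * r) / (β + lam * r) ∧
    effField pendantTriangle β γ lam 0 ≠ 1 ∧
    γ < effField pendantTriangle β γ lam 0 ∧
    effField pendantTriangle β γ lam 0 < 1 / β := by
  obtain rfl : r = triangleZ β γ lam true / triangleZ β γ lam false := hr
  have hlam0 : 0 < lam := hlam ▸ div_pos (sub_pos.mpr hβ1) (sub_pos.mpr hγ1)
  have hlam1 : lam * (1 - γ) = 1 - β := by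
    rw [hlam, div_mul_cancel₀ _ (sub_pos.mpr hγ1).ne']
  have hZ0 : 0 < triangleZ β γ lam false := by simp only [triangleZ]; positivity
  have hZ1 : 0 < triangleZ β γ lam true := by simp only [triangleZ]; positivity
  have hr1 : triangleZ β γ lam true / triangleZ β γ lam false ≠ 1 := by
    refine div_ne_one_of_ne (Ne.symm (sub_ne_zero.mp ?_))
    rw [triangleZ_false_sub_true hlam1]
    exact mul_ne_zero (pow_ne_zero 2 (sub_pos.mpr hβ1).ne') (sub_ne_zero.mpr hβγ)
  have hβγ1 : β * γ < 1 := by nlinarith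
  rw [effField_pendantTriangle hlam0.ne' hZ0.ne']
  exact ⟨rfl, pendantField_ne_one hlam1 hβ1.ne hr1,
    lt_pendantField hβγ1 (by positivity), pendantField_lt_inv hβ0 hβγ1 (by positivity)⟩
end
end

section
/- Let (β,γ) be antiferromagnetic and λ > 0. The equation x = (1 + γλx²)/(β + λx²) has exactly one positive solution x*; moreover γ < x* and βx* < 1. -/
/-- Let `(β,γ)` be antiferromagnetic and `λ > 0`.  The equation
`x = (1 + γλx²)/(β + λx²)` has exactly one positive solution `x*`; moreover `γ < x*`
and `βx* < 1`. -/
theorem unique_positive_fixpoint (β γ lam : ℝ) (hanti : Antiferro β γ) (hlam : 0 < lam) :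
    ∃ x : ℝ, 0 < x ∧ x = (1 + γ * lam * x ^ 2) / (β + lam * x ^ 2) ∧
      γ < x ∧ β * x < 1 ∧
      ∀ y : ℝ, 0 < y → y = (1 + γ * lam * y ^ 2) / (β + lam * y ^ 2) → y = x := by
  obtain ⟨hβ, hγ, hβγ, -⟩ := hanti
  set f : ℝ → ℝ := fun x => lam * x ^ 3 - γ * lam * x ^ 2 + β * x - 1 with hf
  -- f is strictly increasing on [γ, ∞)
  have hmono : ∀ x y : ℝ, γ ≤ x → x < y → f x < f y := by
    intro x y hx hxy
    have hy0 : 0 < y := lt_of_le_of_lt (le_trans hγ hx) hxy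
    have hyg : 0 < y - γ := sub_pos.mpr (lt_of_le_of_lt hx hxy)
    have h1 : 0 < (y - x) * (lam * (y * (y - γ))) :=
      mul_pos (sub_pos.mpr hxy) (mul_pos hlam (mul_pos hy0 hyg))
    have hx0 : 0 ≤ x := le_trans hγ hx
    have h2 : 0 ≤ (y - x) * (lam * (x * (x - γ))) := by
      apply mul_nonneg (le_of_lt (sub_pos.mpr hxy))
      exact mul_nonneg hlam.le (mul_nonneg hx0 (sub_nonneg.mpr hx))
    have h3 : 0 ≤ (y - x) * (lam * (x * y)) := by
      apply mul_nonneg (le_of_lt (sub_pos.mpr hxy))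
      exact mul_nonneg hlam.le (mul_nonneg hx0 hy0.le)
    have h4 : 0 ≤ (y - x) * β := mul_nonneg (le_of_lt (sub_pos.mpr hxy)) hβ
    simp only [hf]
    nlinarith [h1, h2, h3, h4]
  -- any positive fixpoint is a root of f and satisfies γ < y
  have hroot : ∀ y : ℝ, 0 < y → y = (1 + γ * lam * y ^ 2) / (β + lam * y ^ 2) →
      f y = 0 ∧ γ < y := by
    intro y hy hyeq
    have hden : 0 < β + lam * y ^ 2 := by positivity
    have hfy : f y = 0 := by
      rw [eq_div_iff (ne_of_gt hden)] at hyeq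
      simp only [hf]; nlinarith [hyeq]
    refine ⟨hfy, ?_⟩
    by_contra h
    push_neg at h
    have hβy : β * y ≤ β * γ := mul_le_mul_of_nonneg_left h hβ
    have : f y < 0 := by
      simp only [hf]
      nlinarith [mul_nonneg (mul_nonneg hlam.le (sq_nonneg y)) (sub_nonneg.mpr h)]
    linarith [hfy ▸ this]
  -- existence via IVT on [γ, M]
  have hfγ : f γ < 0 := by simp only [hf]; nlinarith
  set M : ℝ := γ + 1 + 1 / lam with hM
  have hMγ : γ < M := by
    have : 0 < 1 / lam := by positivity
    simp only [hM]; linarith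
  have hM1 : 1 ≤ M := by
    have : 0 < 1 / lam := by positivity
    simp only [hM]; linarith
  have hfM : 0 < f M := by
    have hM0 : 0 < M := lt_of_lt_of_le one_pos hM1
    have hsq : 1 ≤ M ^ 2 := by nlinarith
    have hMg : M - γ = 1 + 1 / lam := by simp only [hM]; ring
    have key : lam + 1 ≤ lam * M ^ 2 * (M - γ) := by
      have h1 : lam * (M - γ) = lam + 1 := by
        rw [hMg]; field_simp
      nlinarith [mul_pos hlam (sub_pos.mpr hMγ)]
    have hβM : 0 ≤ β * M := mul_nonneg hβ hM0.le
    simp only [hf]; nlinarith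
  have hcont : ContinuousOn f (Set.Icc γ M) := by
    simp only [hf]; fun_prop
  obtain ⟨c, hcmem, hfc⟩ := intermediate_value_Icc hMγ.le hcont
    (Set.mem_Icc.mpr ⟨hfγ.le, hfM.le⟩)
  have hfc : f c = 0 := hfc
  have hcγ : γ < c := by
    rcases lt_or_eq_of_le hcmem.1 with h | h
    · exact h
    · exfalso; rw [← h] at hfc; linarith
  have hc0 : 0 < c := lt_of_le_of_lt hγ hcγ
  have hden : 0 < β + lam * c ^ 2 := by positivity
  refine ⟨c, hc0, ?_, hcγ, ?_, ?_⟩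
  · rw [eq_div_iff (ne_of_gt hden)]
    have := hfc
    simp only [hf] at this
    nlinarith [this]
  · -- β * c < 1
    have := hfc
    simp only [hf] at this
    nlinarith [mul_pos (mul_pos hlam (by positivity : (0:ℝ) < c ^ 2)) (sub_pos.mpr hcγ)]
  · intro y hy hyeq
    obtain ⟨hfy, hyγ⟩ := hroot y hy hyeq
    rcases lt_trichotomy y c with h | h | h
    · exfalso; have := hmono y c hyγ.le h; rw [hfy, hfc] at this; linarith
    · exact h
    · exfalso; have := hmono c y hcγ.le h; rw [hfy, hfc] at this; linarith
end

section
/- Let (β,γ) be antiferromagnetic and λ > 0. There exist constants C_min, C_max with 0 < C_min < C_max < 1 and τ₀ > 0 such that for every τ ∈ (0,τ₀), setting I' := [x* − 2τ·|ω*|/(1−|ω*|), x* + 2τ·|ω*|/(1−|ω*|)], the following hold for every R ∈ I' and every ρ ∈ [x* − τ, x* + τ]: C_min ≤ |φ_ρ'(R)| ≤ C_max, ω(R) ≤ C_max, and φ_ρ(R) ∈ I'. -/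
/-- For `βγ ≠ 1` and `R > 0`, `ω(R) := (1 + βγ − βR − γ/R)/(1 − βγ)`. -/
noncomputable def omegaFun (β γ R : ℝ) : ℝ := (1 + β * γ - β * R - γ / R) / (1 - β * γ)

/-- The map `φ_ρ(R) := (1 + γλρR)/(β + λρR)`. -/
noncomputable def phiMap (β γ lam p R : ℝ) : ℝ :=
  (1 + γ * lam * (p * R)) / (β + lam * (p * R))

/-!
The fixpoint value `ω* = ω(x*)` equals `|φ'_{x*}(x*)| = λ x* (1 - βγ) / (β + λ x*²)²`, so it is
positive, and it is below `1` because `(1 - ω(R)) R = (β (R - γ)² + γ (1 - βγ)) / (1 - βγ) > 0`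
for every `R > 0`. Hence `C_min = ω*/2` and `C_max = (1 + ω*)/2` work for `|φ_ρ'(R)|` and `ω(R)`
by continuity at `(ρ, R) = (x*, x*)`. For the self-map property write `c = 2ω*/(1 - ω*)`, so that
`I'` has radius `cτ`; since `x* = φ_{x*}(x*)`,
`|φ_ρ(R) - x*| = λ (1 - βγ) |ρR - x*²| / ((β + λρR)(β + λx*²))`, and
`|ρR - x*²| ≤ ρ |R - x*| + x* |ρ - x*| ≤ (ρc + x*) τ`. The coefficient of `τ` tends to
`ω* (c + 1)` as `(ρ, R) → (x*, x*)`, which is `< c` precisely because `c (1 - ω*) = 2ω* > ω*`.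
-/

open Filter Topology Set

theorem exists_forall_Icc_of_eventually_nhds_prod {P : ℝ × ℝ → Prop} {a b c : ℝ} (hc : 0 ≤ c)
    (hP : ∀ᶠ q in 𝓝 (a, b), P q) :
    ∃ τ₀ > 0, ∀ τ ∈ Ioo 0 τ₀, ∀ y ∈ Icc (b - c * τ) (b + c * τ), ∀ x ∈ Icc (a - τ) (a + τ),
      P (x, y) := by
  obtain ⟨δ, hδ, hball⟩ := Metric.eventually_nhds_iff.mp hP
  refine ⟨δ / (1 + c), by positivity, fun τ ⟨hτ, hτδ⟩ y hy x hx => hball ?_⟩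
  have hτδ' : (1 + c) * τ < δ := by rwa [lt_div_iff₀' (by positivity)] at hτδ
  rw [← mem_Icc_iff_abs_le, ← Real.dist_eq, dist_comm] at hx hy
  rw [Prod.dist_eq, max_lt_iff]
  constructor <;> nlinarith

theorem Antiferro.one_sub_mul_pos {β γ : ℝ} (h : Antiferro β γ) : 0 < 1 - β * γ := by
  linarith [h.2.2.1]

theorem Antiferro.omegaFun_lt_one {β γ R : ℝ} (h : Antiferro β γ) (hR : 0 < R) :
    omegaFun β γ R < 1 := by
  obtain ⟨hβ, hγ, hβγ, hne⟩ := h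
  have hsum : 0 < β * (R - γ) ^ 2 + γ * (1 - β * γ) := by
    rcases hγ.eq_or_lt with rfl | hγ
    · have : 0 < β := lt_of_le_of_ne' hβ (by simpa using hne)
      simp only [zero_mul, add_zero, sub_zero]; positivity
    · have : 0 < γ * (1 - β * γ) := mul_pos hγ (by linarith)
      nlinarith [sq_nonneg (R - γ)]
  have hdiff : 1 - β * γ - (1 + β * γ - β * R - γ / R)
      = (β * (R - γ) ^ 2 + γ * (1 - β * γ)) / R := by
    field_simp; ring
  rw [omegaFun, div_lt_one (by linarith), ← sub_pos, hdiff]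
  positivity

theorem continuousAt_omegaFun {β γ R : ℝ} (hR : R ≠ 0) : ContinuousAt (omegaFun β γ) R := by
  unfold omegaFun; fun_prop (disch := exact hR)

theorem hasDerivAt_phiMap {β γ lam p R : ℝ} (h : β + lam * (p * R) ≠ 0) :
    HasDerivAt (phiMap β γ lam p) (lam * p * (β * γ - 1) / (β + lam * (p * R)) ^ 2) R := by
  have hnum : HasDerivAt (fun x => 1 + γ * lam * (p * x)) (γ * lam * p) R := by
    simpa using ((hasDerivAt_id R).const_mul p).const_mul (γ * lam) |>.const_add 1
  have hden : HasDerivAt (fun x => β + lam * (p * x)) (lam * p) R := by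
    simpa using ((hasDerivAt_id R).const_mul p).const_mul lam |>.const_add β
  exact (hnum.div hden h).congr_deriv (by ring)

theorem abs_deriv_phiMap {β γ lam p R : ℝ} (hβγ : β * γ ≤ 1) (hlam : 0 ≤ lam) (hp : 0 ≤ p)
    (h : β + lam * (p * R) ≠ 0) :
    |deriv (phiMap β γ lam p) R| = lam * p * (1 - β * γ) / (β + lam * (p * R)) ^ 2 := by
  have hnum : lam * p * (β * γ - 1) = -(lam * p * (1 - β * γ)) := by ring
  rw [(hasDerivAt_phiMap h).deriv, abs_div, abs_of_nonneg (sq_nonneg (β + lam * (p * R))), hnum,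
    abs_neg, abs_of_nonneg (by have := sub_nonneg.mpr hβγ; positivity)]

theorem phiMap_sub_phiMap {β γ lam p R p' R' : ℝ} (h : β + lam * (p * R) ≠ 0)
    (h' : β + lam * (p' * R') ≠ 0) :
    phiMap β γ lam p R - phiMap β γ lam p' R' =
      lam * (β * γ - 1) / ((β + lam * (p * R)) * (β + lam * (p' * R'))) * (p * R - p' * R') := by
  rw [phiMap, phiMap, div_sub_div _ _ h h', div_mul_eq_mul_div]
  congr 1; ring

theorem abs_phiMap_sub_le {β γ lam p R p' R' : ℝ} (hβγ : β * γ ≤ 1) (hlam : 0 ≤ lam)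
    (hp : 0 ≤ p) (hR' : 0 ≤ R') (hB : 0 < β + lam * (p * R)) (hB' : 0 < β + lam * (p' * R')) :
    |phiMap β γ lam p R - phiMap β γ lam p' R'| ≤
      lam * (1 - β * γ) / ((β + lam * (p * R)) * (β + lam * (p' * R'))) *
        (p * |R - R'| + R' * |p - p'|) := by
  have hsplit : p * R - p' * R' = p * (R - R') + (p - p') * R' := by ring
  have hcoef : lam * (β * γ - 1) / ((β + lam * (p * R)) * (β + lam * (p' * R'))) =
      -(lam * (1 - β * γ) / ((β + lam * (p * R)) * (β + lam * (p' * R')))) := by ring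
  have hcoef_nonneg : 0 ≤ lam * (1 - β * γ) / ((β + lam * (p * R)) * (β + lam * (p' * R'))) := by
    have := sub_nonneg.mpr hβγ; positivity
  rw [phiMap_sub_phiMap hB.ne' hB'.ne', hcoef, abs_mul, abs_neg, abs_of_nonneg hcoef_nonneg]
  refine mul_le_mul_of_nonneg_left ?_ hcoef_nonneg
  calc |p * R - p' * R'| ≤ |p * (R - R')| + |(p - p') * R'| := hsplit ▸ abs_add_le _ _
    _ = p * |R - R'| + R' * |p - p'| := by
      rw [abs_mul, abs_mul, abs_of_nonneg hp, abs_of_nonneg hR']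
      ring

theorem phiMap_self_of_fixpoint {β γ lam xs : ℝ}
    (hfix : xs = (1 + γ * lam * xs ^ 2) / (β + lam * xs ^ 2)) : phiMap β γ lam xs xs = xs := by
  rw [phiMap, ← sq, ← hfix]

theorem abs_phiMap_sub_fixpoint_le {β γ lam xs p R c τ : ℝ} (hβ : 0 ≤ β) (hβγ : β * γ ≤ 1)
    (hlam : 0 < lam) (hxs : 0 < xs) (hfix : xs = (1 + γ * lam * xs ^ 2) / (β + lam * xs ^ 2))
    (hp : 0 ≤ p) (hτ : 0 ≤ τ) (hB : 0 < β + lam * (p * R)) (hR : |R - xs| ≤ c * τ)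
    (hpx : |p - xs| ≤ τ)
    (hcontr : lam * (1 - β * γ) / ((β + lam * (p * R)) * (β + lam * (xs * xs))) * (p * c + xs)
      ≤ c) :
    |phiMap β γ lam p R - xs| ≤ c * τ := by
  have hA : 0 < β + lam * (xs * xs) := by positivity
  have := sub_nonneg.mpr hβγ
  set G := lam * (1 - β * γ) / ((β + lam * (p * R)) * (β + lam * (xs * xs)))
  calc |phiMap β γ lam p R - xs| ≤ G * (p * |R - xs| + xs * |p - xs|) := by
        simpa only [phiMap_self_of_fixpoint hfix] using
          abs_phiMap_sub_le hβγ hlam.le hp hxs.le hB hA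
    _ ≤ G * (p * (c * τ) + xs * τ) := by gcongr
    _ = G * (p * c + xs) * τ := by ring
    _ ≤ c * τ := mul_le_mul_of_nonneg_right hcontr hτ

theorem omegaFun_eq_of_fixpoint {β γ lam xs : ℝ} (hanti : Antiferro β γ) (hlam : 0 < lam)
    (hxs : 0 < xs) (hfix : xs = (1 + γ * lam * xs ^ 2) / (β + lam * xs ^ 2)) :
    omegaFun β γ xs = lam * xs * (1 - β * γ) / (β + lam * (xs * xs)) ^ 2 := by
  have hA : 0 < β + lam * xs ^ 2 := by have := hanti.1; positivity
  have hE : xs * (β + lam * xs ^ 2) = 1 + γ * lam * xs ^ 2 := by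
    rw [eq_div_iff hA.ne'] at hfix; exact hfix
  have hK := hanti.one_sub_mul_pos.ne'
  rw [omegaFun, ← sq, div_eq_div_iff hK (pow_ne_zero 2 hA.ne')]
  field_simp
  linear_combination (-(xs - γ) * (β + lam * xs ^ 2) ^ 2
    + lam * xs ^ 2 * ((xs - γ) * (β + lam * xs ^ 2) + 1 - β * γ)) * hE

theorem omegaFun_pos_of_fixpoint {β γ lam xs : ℝ} (hanti : Antiferro β γ) (hlam : 0 < lam)
    (hxs : 0 < xs) (hfix : xs = (1 + γ * lam * xs ^ 2) / (β + lam * xs ^ 2)) :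
    0 < omegaFun β γ xs := by
  have := hanti.1
  have := hanti.one_sub_mul_pos
  rw [omegaFun_eq_of_fixpoint hanti hlam hxs hfix]
  positivity

theorem eventually_bounds_near_fixpoint {β γ lam xs a b c : ℝ} (hanti : Antiferro β γ)
    (hlam : 0 < lam) (hxs : 0 < xs) (hfix : xs = (1 + γ * lam * xs ^ 2) / (β + lam * xs ^ 2))
    (ha : a < omegaFun β γ xs) (hb : omegaFun β γ xs < b)
    (hc : omegaFun β γ xs * (c + 1) < c) :
    ∀ᶠ q : ℝ × ℝ in 𝓝 (xs, xs), 0 < q.1 ∧ 0 < β + lam * (q.1 * q.2) ∧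
      a < lam * q.1 * (1 - β * γ) / (β + lam * (q.1 * q.2)) ^ 2 ∧
      lam * q.1 * (1 - β * γ) / (β + lam * (q.1 * q.2)) ^ 2 < b ∧
      omegaFun β γ q.2 < b ∧
      lam * (1 - β * γ) / ((β + lam * (q.1 * q.2)) * (β + lam * (xs * xs))) * (q.1 * c + xs)
        < c := by
  have hA : 0 < β + lam * (xs * xs) := by have := hanti.1; positivity
  have hω := omegaFun_eq_of_fixpoint hanti hlam hxs hfix
  have hden : ContinuousAt (fun q : ℝ × ℝ => β + lam * (q.1 * q.2)) (xs, xs) := by fun_prop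
  have hderiv : ContinuousAt
      (fun q : ℝ × ℝ => lam * q.1 * (1 - β * γ) / (β + lam * (q.1 * q.2)) ^ 2) (xs, xs) :=
    (by fun_prop : ContinuousAt (fun q : ℝ × ℝ => lam * q.1 * (1 - β * γ)) _).div (hden.pow 2)
      (pow_ne_zero 2 hA.ne')
  have hcontr : ContinuousAt (fun q : ℝ × ℝ =>
      lam * (1 - β * γ) / ((β + lam * (q.1 * q.2)) * (β + lam * (xs * xs))) * (q.1 * c + xs))
      (xs, xs) :=
    ((continuousAt_const.div (hden.mul continuousAt_const) (mul_ne_zero hA.ne' hA.ne')).mul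
      (by fun_prop))
  have hωR : ContinuousAt (fun q : ℝ × ℝ => omegaFun β γ q.2) (xs, xs) :=
    (continuousAt_omegaFun hxs.ne').comp_of_eq continuousAt_snd rfl
  have hcontr_val : lam * (1 - β * γ) / ((β + lam * (xs * xs)) * (β + lam * (xs * xs))) *
      (xs * c + xs) = omegaFun β γ xs * (c + 1) := by
    rw [hω]; field_simp
  refine ((continuousAt_fst.tendsto.eventually_const_lt hxs).and
    ((hden.tendsto.eventually_const_lt hA).and
    ((hderiv.tendsto.eventually_const_lt (hω ▸ ha)).and
    ((hderiv.tendsto.eventually_lt_const (hω ▸ hb)).and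
    ((hωR.tendsto.eventually_lt_const hb).and
    (hcontr.tendsto.eventually_lt_const (hcontr_val ▸ hc)))))))

/-- Let `(β,γ)` be antiferromagnetic, `λ > 0`, and let `x*` be the unique
positive fixpoint of `x ↦ (1 + γλx²)/(β + λx²)` with `ω* = ω(x*)`.  There exist constants
`0 < C_min < C_max < 1` and `τ₀ > 0` such that for all `τ ∈ (0,τ₀)`, setting
`I' = [x* − 2τ|ω*|/(1−|ω*|), x* + 2τ|ω*|/(1−|ω*|)]`, for every `R ∈ I'` and every
`ρ ∈ [x*−τ, x*+τ]`:  `C_min ≤ |φ_ρ'(R)| ≤ C_max`, `ω(R) ≤ C_max`, and `φ_ρ(R) ∈ I'`. -/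
theorem phi_contraction (β γ lam xs : ℝ) (hanti : Antiferro β γ) (hlam : 0 < lam)
    (hxs : 0 < xs) (hfix : xs = (1 + γ * lam * xs ^ 2) / (β + lam * xs ^ 2)) :
    ∃ Cmin Cmax τ₀ : ℝ, 0 < Cmin ∧ Cmin < Cmax ∧ Cmax < 1 ∧ 0 < τ₀ ∧
      ∀ τ ∈ Set.Ioo (0 : ℝ) τ₀,
        ∀ R ∈ Set.Icc (xs - 2 * τ * |omegaFun β γ xs| / (1 - |omegaFun β γ xs|))
            (xs + 2 * τ * |omegaFun β γ xs| / (1 - |omegaFun β γ xs|)),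
          ∀ p ∈ Set.Icc (xs - τ) (xs + τ),
            (Cmin ≤ |deriv (phiMap β γ lam p) R| ∧ |deriv (phiMap β γ lam p) R| ≤ Cmax) ∧
            omegaFun β γ R ≤ Cmax ∧
            phiMap β γ lam p R ∈
              Set.Icc (xs - 2 * τ * |omegaFun β γ xs| / (1 - |omegaFun β γ xs|))
                (xs + 2 * τ * |omegaFun β γ xs| / (1 - |omegaFun β γ xs|)) := by
  set w := omegaFun β γ xs
  have hw0 : 0 < w := omegaFun_pos_of_fixpoint hanti hlam hxs hfix
  have hw1 : w < 1 := hanti.omegaFun_lt_one hxs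
  set c := 2 * w / (1 - w)
  have hc0 : 0 ≤ c := div_nonneg (by linarith) (by linarith)
  have hwc : w * (c + 1) < c := by
    have : c * (1 - w) = 2 * w := div_mul_cancel₀ _ (by linarith)
    nlinarith
  obtain ⟨τ₀, hτ₀, hbox⟩ := exists_forall_Icc_of_eventually_nhds_prod hc0
    (eventually_bounds_near_fixpoint (a := w / 2) (b := (1 + w) / 2) hanti hlam hxs hfix
      (by linarith) (by linarith) hwc)
  refine ⟨w / 2, (1 + w) / 2, τ₀, by linarith, by linarith, by linarith, hτ₀,
    fun τ hτ R hR p hp => ?_⟩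
  have hrad : 2 * τ * |w| / (1 - |w|) = c * τ := by rw [abs_of_pos hw0]; ring
  rw [hrad] at hR ⊢
  have hpR := hbox τ hτ R hR p hp
  dsimp only at hpR
  obtain ⟨hp0, hB, hderiv_lo, hderiv_hi, hωR, hcontr⟩ := hpR
  rw [abs_deriv_phiMap hanti.2.2.1.le hlam.le hp0.le hB.ne']
  refine ⟨⟨hderiv_lo.le, hderiv_hi.le⟩, hωR.le, ?_⟩
  rw [← mem_Icc_iff_abs_le, abs_sub_comm] at hR hp ⊢
  exact abs_phiMap_sub_fixpoint_le hanti.1 hanti.2.2.1.le hlam hxs hfix hp0.le hτ.1.le hB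
    hR hp hcontr.le
end

section
/- Let (β,γ) be antiferromagnetic, λ > 0 and δ ∈ (0, |ω*|/100). There exists τ₀ > 0 such that for every τ ∈ (0,τ₀) the following holds: if R₁,…,R_k ∈ [x* − τ, x* + τ] are such that every point of [x* − τ, x* + τ] is within distance τδ of some R_i, then, setting I := [x* − |ω*|τ/2, x* + |ω*|τ/2], for every x₁, x₂ ∈ I with |x₁ − x₂| ≤ |ω*|τδ/2 there exists i ∈ {1,…,k} such that both x₁ and x₂ lie in φ_{R_i}(I), the image of I under φ_{R_i}. -/
variable {β γ lam xs : ℝ}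

lemma gamma_lt_of_fixpoint (hβ : 0 ≤ β) (hβγ : β * γ < 1) (hlam : 0 ≤ lam) (hxs : 0 < xs)
    (hfix : xs * (β + lam * xs ^ 2) = 1 + γ * lam * xs ^ 2) : γ < xs := by
  by_contra! h
  nlinarith [mul_le_mul_of_nonneg_left h (by positivity : 0 ≤ lam * xs ^ 2),
    mul_le_mul_of_nonneg_left h hβ]

lemma omegaFun_mul_of_fixpoint (hβγ : β * γ ≠ 1) (hxs : xs ≠ 0)
    (hfix : xs * (β + lam * xs ^ 2) = 1 + γ * lam * xs ^ 2) :
    omegaFun β γ xs * (β + lam * xs ^ 2) = lam * xs * (xs - γ) := by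
  rw [omegaFun, div_mul_eq_mul_div, div_eq_iff (sub_ne_zero.2 hβγ.symm)]
  field_simp
  linear_combination (β * (γ - xs)) * hfix

lemma omegaFun_mem_Ioo_of_fixpoint (hanti : Antiferro β γ) (hlam : 0 < lam) (hxs : 0 < xs)
    (hfix : xs * (β + lam * xs ^ 2) = 1 + γ * lam * xs ^ 2) :
    omegaFun β γ xs ∈ Set.Ioo 0 1 := by
  obtain ⟨hβ, hγ, hβγ, hne⟩ := hanti
  have hD : 0 < β + lam * xs ^ 2 := by positivity
  have hγx := gamma_lt_of_fixpoint hβ hβγ hlam.le hxs hfix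
  have hω := omegaFun_mul_of_fixpoint hβγ.ne hxs.ne' hfix
  rw [← eq_div_iff hD.ne'] at hω
  rw [hω, Set.mem_Ioo, div_lt_one hD]
  refine ⟨by have := sub_pos.2 hγx; positivity, ?_⟩
  have : 0 < β + lam * γ * xs := by
    rcases hne with h | h
    · have := lt_of_le_of_ne hβ (Ne.symm h); positivity
    · have := lt_of_le_of_ne hγ (Ne.symm h); positivity
  linarith

lemma phiMap_sub_linear_eq {w R y : ℝ} (hxs : xs ≠ 0) (hD : β + lam * (R * y) ≠ 0)
    (hfix : xs * (β + lam * xs ^ 2) = 1 + γ * lam * xs ^ 2)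
    (hw : w * (β + lam * xs ^ 2) = lam * xs * (xs - γ)) :
    phiMap β γ lam R y - (xs - w * (R - xs) - w * (y - xs)) =
      -(w * ((R - xs) * (y - xs)) / xs) +
        w * lam * (xs ^ 2 - R * y) ^ 2 / (xs * (β + lam * (R * y))) := by
  -- By the fixpoint equation, `φ_R(y) - x* = λ(x* - γ)(x*² - Ry)/(β + λRy)`.
  rw [phiMap, ← mul_assoc]
  rw [← mul_assoc] at hD
  field_simp
  linear_combination (-xs) * hfix + (R * y - xs ^ 2) * hw

lemma abs_phiMap_sub_linear_le {w R y τ : ℝ} (hβ : 0 ≤ β) (hlam : 0 < lam) (hxs : 0 < xs)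
    (hfix : xs * (β + lam * xs ^ 2) = 1 + γ * lam * xs ^ 2)
    (hw : w * (β + lam * xs ^ 2) = lam * xs * (xs - γ)) (hw0 : 0 ≤ w)
    (hτ : τ ≤ xs / 2) (hR : |R - xs| ≤ τ) (hy : |y - xs| ≤ τ) :
    |phiMap β γ lam R y - (xs - w * (R - xs) - w * (y - xs))| ≤ 26 * w * τ ^ 2 / xs := by
  obtain ⟨hR₁, hR₂⟩ := abs_le.1 hR
  obtain ⟨hy₁, hy₂⟩ := abs_le.1 hy
  have hτ0 : 0 ≤ τ := (abs_nonneg _).trans hR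
  have hRy : xs ^ 2 / 4 ≤ R * y := by nlinarith
  have hD : 0 < β + lam * (R * y) := by
    have : 0 < R * y := lt_of_lt_of_le (by positivity) hRy
    positivity
  have hdev : |xs ^ 2 - R * y| ≤ 5 / 2 * xs * τ := by
    have : xs ^ 2 - R * y = -(xs * (R - xs) + xs * (y - xs) + (R - xs) * (y - xs)) := by ring
    rw [this, abs_neg]
    calc _ ≤ |xs * (R - xs)| + |xs * (y - xs)| + |(R - xs) * (y - xs)| := abs_add_three _ _ _
      _ ≤ xs * τ + xs * τ + τ * τ := by
        simp only [abs_mul, abs_of_pos hxs]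
        gcongr
      _ ≤ 5 / 2 * xs * τ := by nlinarith
  have hbilin : |-(w * ((R - xs) * (y - xs)) / xs)| ≤ w * τ ^ 2 / xs := by
    rw [abs_neg, abs_div, abs_mul, abs_mul, abs_of_nonneg hw0, abs_of_pos hxs, sq]
    gcongr
  have hquad : w * lam * (xs ^ 2 - R * y) ^ 2 / (xs * (β + lam * (R * y))) ≤
      25 * w * τ ^ 2 / xs := by
    rw [div_le_div_iff₀ (by positivity) hxs]
    have : (xs ^ 2 - R * y) ^ 2 ≤ (5 / 2 * xs * τ) ^ 2 :=
      sq_le_sq' (abs_le.1 hdev).1 (abs_le.1 hdev).2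
    have : lam * (xs ^ 2 - R * y) ^ 2 ≤ 25 * τ ^ 2 * (β + lam * (R * y)) := by
      nlinarith [mul_le_mul_of_nonneg_left this hlam.le, mul_le_mul_of_nonneg_left hRy hlam.le]
    nlinarith [mul_le_mul_of_nonneg_left this (mul_nonneg hw0 hxs.le)]
  rw [phiMap_sub_linear_eq hxs.ne' hD.ne' hfix hw]
  calc _ ≤ _ := abs_add_le _ _
    _ ≤ w * τ ^ 2 / xs + 25 * w * τ ^ 2 / xs := by
      have : 0 ≤ w * lam * (xs ^ 2 - R * y) ^ 2 / (xs * (β + lam * (R * y))) := by positivity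
      rw [abs_of_nonneg this]
      exact add_le_add hbilin hquad
    _ = _ := by ring

lemma continuousOn_phiMap {R : ℝ} (hβ : 0 ≤ β) (hlam : 0 < lam) (hR : 0 < R) :
    ContinuousOn (phiMap β γ lam R) (Set.Ioi 0) :=
  ContinuousOn.div (by fun_prop) (by fun_prop) fun y (hy : 0 < y) => by positivity

lemma mem_phiMap_image_Icc {w R τ x : ℝ} (hβ : 0 ≤ β) (hlam : 0 < lam) (hxs : 0 < xs)
    (hfix : xs * (β + lam * xs ^ 2) = 1 + γ * lam * xs ^ 2)
    (hw : w * (β + lam * xs ^ 2) = lam * xs * (xs - γ)) (hw0 : 0 < w) (hw2 : w ≤ 2)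
    (hτ0 : 0 < τ) (hτ : τ ≤ w * xs / 100) (hR : |R - xs| ≤ τ)
    (hx : |x - (xs - w * (R - xs))| ≤ w ^ 2 * τ / 5) :
    x ∈ phiMap β γ lam R '' Set.Icc (xs - w * τ / 2) (xs + w * τ / 2) := by
  have hwτ : 0 < w * τ / 2 := by positivity
  have hτx : τ ≤ xs / 2 := by nlinarith
  have hc : |w * τ / 2| ≤ τ := by rw [abs_of_pos hwτ]; nlinarith
  have herr : 26 * w * τ ^ 2 / xs ≤ 26 / 100 * w ^ 2 * τ := by
    rw [div_le_iff₀ hxs]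
    nlinarith [mul_le_mul_of_nonneg_left hτ (by positivity : 0 ≤ 26 * w * τ)]
  have hleft := abs_le.1 <| abs_phiMap_sub_linear_le hβ hlam hxs hfix hw hw0.le hτx hR
    (y := xs - w * τ / 2) (by rwa [sub_sub_cancel_left, abs_neg])
  have hright := abs_le.1 <| abs_phiMap_sub_linear_le hβ hlam hxs hfix hw hw0.le hτx hR
    (y := xs + w * τ / 2) (by rwa [add_sub_cancel_left])
  obtain ⟨hx₁, hx₂⟩ := abs_le.1 hx
  have hR0 : 0 < R := by linarith [(abs_le.1 hR).1]
  have hIcc : Set.Icc (xs - w * τ / 2) (xs + w * τ / 2) ⊆ Set.Ioi 0 := fun y hy =>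
    lt_of_lt_of_le (by linarith [abs_of_pos hwτ]) hy.1
  refine intermediate_value_Icc' (by linarith) ((continuousOn_phiMap hβ hlam hR0).mono hIcc)
    ⟨?_, ?_⟩ <;> linarith

lemma exists_abs_sub_reflect_le {ι : Type*} {a τ ε w x : ℝ} (R : ι → ℝ)
    (hnet : ∀ y ∈ Set.Icc (a - τ) (a + τ), ∃ i, |y - R i| ≤ ε) (hw : 0 < w)
    (hx : |x - a| ≤ w * τ) : ∃ i, |x - (a - w * (R i - a))| ≤ w * ε := by
  have hy : a - (x - a) / w ∈ Set.Icc (a - τ) (a + τ) := by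
    rw [← Set.mem_Icc_iff_abs_le, sub_sub_cancel, abs_div, abs_of_pos hw, div_le_iff₀' hw]
    exact hx
  obtain ⟨i, hi⟩ := hnet _ hy
  refine ⟨i, ?_⟩
  have : x - (a - w * (R i - a)) = -(w * (a - (x - a) / w - R i)) := by field_simp; ring
  rw [this, abs_neg, abs_mul, abs_of_pos hw]
  exact mul_le_mul_of_nonneg_left hi hw.le

/-- Let `(β,γ)` be antiferromagnetic, `λ > 0`, `x*` the unique positive
fixpoint of `x ↦ (1 + γλx²)/(β + λx²)` with `ω* = ω(x*)`, and `δ ∈ (0, |ω*|/100)`.  There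
exists `τ₀ > 0` such that for all `τ ∈ (0,τ₀)`:  whenever `R₁,…,R_k ∈ [x*−τ, x*+τ]` is a
family such that every point of `[x*−τ, x*+τ]` is within `τδ` of some `Rᵢ`, then, with
`I := [x* − |ω*|τ/2, x* + |ω*|τ/2]`, every `x₁, x₂ ∈ I` with `|x₁ − x₂| ≤ |ω*|τδ/2` both
lie in `φ_{Rᵢ}(I)` for some `i`. -/
theorem wellCovered (β γ lam xs δ : ℝ) (hanti : Antiferro β γ) (hlam : 0 < lam)
    (hxs : 0 < xs) (hfix : xs = (1 + γ * lam * xs ^ 2) / (β + lam * xs ^ 2))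
    (hδ : δ ∈ Set.Ioo 0 (|omegaFun β γ xs| / 100)) :
    ∃ τ₀ : ℝ, 0 < τ₀ ∧ ∀ τ ∈ Set.Ioo (0 : ℝ) τ₀, ∀ (k : ℕ) (R : Fin k → ℝ),
      (∀ i, R i ∈ Set.Icc (xs - τ) (xs + τ)) →
      (∀ x ∈ Set.Icc (xs - τ) (xs + τ), ∃ i, |x - R i| ≤ τ * δ) →
      ∀ x₁ ∈ Set.Icc (xs - |omegaFun β γ xs| * τ / 2) (xs + |omegaFun β γ xs| * τ / 2),
      ∀ x₂ ∈ Set.Icc (xs - |omegaFun β γ xs| * τ / 2) (xs + |omegaFun β γ xs| * τ / 2),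
        |x₁ - x₂| ≤ |omegaFun β γ xs| * τ * δ / 2 →
        ∃ i, x₁ ∈ phiMap β γ lam (R i) ''
                Set.Icc (xs - |omegaFun β γ xs| * τ / 2) (xs + |omegaFun β γ xs| * τ / 2) ∧
             x₂ ∈ phiMap β γ lam (R i) ''
                Set.Icc (xs - |omegaFun β γ xs| * τ / 2) (xs + |omegaFun β γ xs| * τ / 2) := by
  have hβ := hanti.1
  have hfix' : xs * (β + lam * xs ^ 2) = 1 + γ * lam * xs ^ 2 :=
    (eq_div_iff (by positivity)).1 hfix
  have hω := omegaFun_mul_of_fixpoint hanti.2.2.1.ne hxs.ne' hfix'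
  obtain ⟨hω0, hω1⟩ := omegaFun_mem_Ioo_of_fixpoint hanti hlam hxs hfix'
  set ω := omegaFun β γ xs
  rw [abs_of_pos hω0] at hδ ⊢
  refine ⟨ω * xs / 100, by positivity, ?_⟩
  rintro τ ⟨hτ0, hτ⟩ k R hR hnet x₁ hx₁ x₂ hx₂ h₁₂
  have hR' i : |R i - xs| ≤ τ := by rw [abs_sub_comm]; exact Set.mem_Icc_iff_abs_le.2 (hR i)
  have hx₁' : |x₁ - xs| ≤ ω * τ := by
    rw [abs_sub_comm]
    linarith [Set.mem_Icc_iff_abs_le.2 hx₁, (by positivity : 0 ≤ ω * τ)]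
  obtain ⟨i, hi⟩ := exists_abs_sub_reflect_le R hnet hω0 hx₁'
  have hi₂ : |x₂ - (xs - ω * (R i - xs))| ≤ ω * τ * δ / 2 + ω * (τ * δ) :=
    (abs_sub_le _ x₁ _).trans (add_le_add (by rwa [abs_sub_comm]) hi)
  have hδω : ω * τ * δ ≤ ω ^ 2 * τ / 100 := by
    nlinarith [mul_le_mul_of_nonneg_left hδ.2.le (by positivity : 0 ≤ ω * τ)]
  have hmem {x : ℝ} (hx : |x - (xs - ω * (R i - xs))| ≤ ω ^ 2 * τ / 5) :
      x ∈ phiMap β γ lam (R i) '' Set.Icc (xs - ω * τ / 2) (xs + ω * τ / 2) :=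
    mem_phiMap_image_Icc hβ hlam hxs hfix' hω hω0 (by linarith) hτ0 hτ.le (hR' i) hx
  refine ⟨i, hmem (hi.trans ?_), hmem (hi₂.trans ?_)⟩ <;>
    linarith [(by positivity : 0 ≤ ω ^ 2 * τ)]
end

section
/- Let (β,γ) be antiferromagnetic and let L, U be reals with γ < L < U and βU < 1. Then ((Lβ − 1)(γ − U))/((Uβ − 1)(γ − L)) > U/L. -/
/-- Let `(β,γ)` be antiferromagnetic and let `L, U` be reals with
`γ < L < U` and `βU < 1`.  Then `((Lβ − 1)(γ − U))/((Uβ − 1)(γ − L)) > U/L`. -/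
theorem ratio_contraction (β γ L U : ℝ) (hanti : Antiferro β γ) (hγL : γ < L) (hLU : L < U)
    (hU : β * U < 1) :
    ((L * β - 1) * (γ - U)) / ((U * β - 1) * (γ - L)) > U / L := by
  obtain ⟨hβ, hγ, hβγ, hne⟩ := hanti
  have hL : 0 < L := lt_of_le_of_lt hγ hγL
  have hU0 : 0 < U := hL.trans hLU
  have hden : 0 < (U * β - 1) * (γ - L) :=
    mul_pos_of_neg_of_neg (by nlinarith) (by linarith)
  rw [gt_iff_lt, div_lt_div_iff₀ hL hden]
  have hβL : β * L < 1 := by nlinarith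
  rcases hne with h | h
  · have hb : 0 < β := lt_of_le_of_ne hβ (Ne.symm h)
    nlinarith [mul_pos (mul_pos (mul_pos hb hU0) (sub_pos.mpr hγL)) (sub_pos.mpr hLU),
      mul_nonneg (mul_nonneg hγ (sub_nonneg.mpr hβL.le)) (sub_pos.mpr hLU).le]
  · have hg : 0 < γ := lt_of_le_of_ne hγ (Ne.symm h)
    nlinarith [mul_nonneg (mul_nonneg (mul_nonneg hβ hU0.le) (sub_pos.mpr hγL).le) (sub_pos.mpr hLU).le,
      mul_pos (mul_pos hg (sub_pos.mpr hβL)) (sub_pos.mpr hLU)]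
end

section
/- Let I = [I_L, I_R] be a closed interval with 0 < I_L < I_R, let a ∈ (I_L, I_R), and let F : I → ℝ be continuous. Suppose that for all x₁, x₂, x₃ ∈ I with x₁x₂ = x₃·a one has F(x₁) + F(x₂) = F(x₃) + F(a). Then there exists a constant c ∈ ℝ such that F(x) = c·log(x/a) + F(a) for all x ∈ I. -/
/-!
Substituting `x = a·eᵗ` turns the functional equation into additivity of
`G t = F (a eᵗ) - F a` on `[L, R] = [log (I_L/a), log (I_R/a)]`, where `L < 0 < R`.
On `[0, R]` additivity gives `G (m/n · R) = m/n · G R`, and continuity extends this to all of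
`[0, R]`; reflecting `t ↦ -t` handles `[L, 0]`, and since `G (-σ) = -G σ` for small `σ` the
two slopes coincide.
-/

open Set Filter Topology Real

def IsAdditiveOn (G : ℝ → ℝ) (s : Set ℝ) : Prop :=
  ∀ x ∈ s, ∀ y ∈ s, x + y ∈ s → G (x + y) = G x + G y

namespace IsAdditiveOn

variable {G : ℝ → ℝ} {s : Set ℝ} {L R : ℝ}

theorem mono {t : Set ℝ} (hG : IsAdditiveOn G s) (hts : t ⊆ s) : IsAdditiveOn G t :=
  fun x hx y hy hxy => hG x (hts hx) y (hts hy) (hts hxy)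

open Pointwise in
theorem comp_neg (hG : IsAdditiveOn G s) : IsAdditiveOn (fun x => G (-x)) (-s) := by
  intro x hx y hy hxy
  simpa only [neg_add] using hG (-x) hx (-y) hy (by rw [← neg_add]; exact hxy)

theorem map_zero (hG : IsAdditiveOn G s) (h0 : (0 : ℝ) ∈ s) : G 0 = 0 := by
  have h := hG 0 h0 0 h0 (by rwa [add_zero])
  rw [add_zero] at h
  linarith

theorem map_neg (hG : IsAdditiveOn G s) (h0 : (0 : ℝ) ∈ s) {x : ℝ} (hx : x ∈ s)
    (hnx : -x ∈ s) : G (-x) = -G x := by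
  have h := hG x hx (-x) hnx (by rwa [add_neg_cancel])
  rw [add_neg_cancel, hG.map_zero h0] at h
  linarith

theorem map_natCast_mul (hG : IsAdditiveOn G (Icc 0 R)) {u : ℝ} (hu : 0 ≤ u) :
    ∀ n : ℕ, n * u ≤ R → G (n * u) = n * G u
  | 0, h => by
    simp only [Nat.cast_zero, zero_mul] at h ⊢
    exact hG.map_zero ⟨le_rfl, h⟩
  | n + 1, h => by
    have hnu : (n : ℝ) * u ≤ R := le_trans (by push_cast; nlinarith) h
    have hnu0 : 0 ≤ (n : ℝ) * u := by positivity
    push_cast at h ⊢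
    rw [add_one_mul, hG _ ⟨hnu0, hnu⟩ u ⟨hu, by linarith⟩ ⟨by positivity, by linarith⟩,
      map_natCast_mul hG hu n hnu]
    ring

theorem map_div_mul (hG : IsAdditiveOn G (Icc 0 R)) (hR : 0 ≤ R) {m n : ℕ} (hn : 0 < n)
    (hmn : m ≤ n) : G (m / n * R) = m / n * G R := by
  have hn' : (0 : ℝ) < n := Nat.cast_pos.2 hn
  have hu : 0 ≤ R / n := div_nonneg hR hn'.le
  have hnu : (n : ℝ) * (R / n) = R := mul_div_cancel₀ R hn'.ne'
  have hGu : G R = n * G (R / n) := by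
    rw [← hG.map_natCast_mul hu n hnu.le, hnu]
  have hmu : (m : ℝ) * (R / n) ≤ R :=
    (mul_le_mul_of_nonneg_right (Nat.cast_le.2 hmn) hu).trans_eq hnu
  rw [show (m : ℝ) / n * R = m * (R / n) by ring, hG.map_natCast_mul hu m hmu, hGu]
  field_simp

theorem eq_div_mul_of_continuousOn (hG : IsAdditiveOn G (Icc 0 R))
    (hc : ContinuousOn G (Icc 0 R)) (hR : 0 < R) {t : ℝ} (ht : t ∈ Icc 0 R) :
    G t = G R / R * t := by
  have htR : t / R ∈ Icc (0 : ℝ) 1 :=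
    ⟨div_nonneg ht.1 hR.le, (div_le_one hR).2 ht.2⟩
  set q : ℕ → ℝ := fun n => ⌊t / R * n⌋₊ / n
  have hq : Tendsto q atTop (𝓝 (t / R)) :=
    (tendsto_nat_floor_mul_div_atTop htR.1).comp tendsto_natCast_atTop_atTop
  have hq_le : ∀ n, q n ≤ t / R := fun n =>
    div_le_of_le_mul₀ n.cast_nonneg htR.1 (Nat.floor_le (by have := htR.1; positivity))
  have hqR_mem : ∀ n, q n * R ∈ Icc 0 R := fun n =>
    ⟨by positivity, mul_le_of_le_one_left hR.le ((hq_le n).trans htR.2)⟩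
  have hGq : ∀ᶠ n in atTop, q n * G R = G (q n * R) := by
    refine eventually_atTop.2 ⟨1, fun n hn => (hG.map_div_mul hR.le hn ?_).symm⟩
    exact Nat.floor_le_of_le (mul_le_of_le_one_left n.cast_nonneg htR.2)
  have hlim_mul : Tendsto (fun n => G (q n * R)) atTop (𝓝 (t / R * G R)) :=
    (hq.mul_const _).congr' hGq
  have hqR : Tendsto (fun n => q n * R) atTop (𝓝[Icc 0 R] t) := by
    refine tendsto_nhdsWithin_iff.2 ⟨?_, Eventually.of_forall hqR_mem⟩
    simpa only [div_mul_cancel₀ t hR.ne'] using hq.mul_const R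
  have hlim_G : Tendsto (fun n => G (q n * R)) atTop (𝓝 (G t)) := (hc t ht).tendsto.comp hqR
  rw [tendsto_nhds_unique hlim_G hlim_mul]
  ring

theorem exists_eq_mul_of_continuousOn (hG : IsAdditiveOn G (Icc L R))
    (hc : ContinuousOn G (Icc L R)) (hL : L < 0) (hR : 0 < R) :
    ∃ c, ∀ t ∈ Icc L R, G t = c * t := by
  have hpos : ∀ t ∈ Icc 0 R, G t = G R / R * t := by
    have hsub : Icc 0 R ⊆ Icc L R := Icc_subset_Icc_left hL.le
    exact fun t => (hG.mono hsub).eq_div_mul_of_continuousOn (hc.mono hsub) hR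
  have hneg : ∀ t ∈ Icc L 0, G t = G L / L * t := by
    intro t ht
    have hmaps : MapsTo (fun x : ℝ => -x) (Icc 0 (-L)) (Icc L R) := fun x hx =>
      ⟨by linarith [hx.2], by linarith [hx.1]⟩
    have h := (hG.comp_neg.mono hmaps).eq_div_mul_of_continuousOn
      (hc.comp continuousOn_neg hmaps) (neg_pos.2 hL) (t := -t)
      ⟨by linarith [ht.2], by linarith [ht.1]⟩
    simp only [neg_neg] at h
    rw [h, div_neg, neg_mul_neg]
  have hslope : G L / L = G R / R := by
    have hσ : 0 < min R (-L) := lt_min hR (neg_pos.2 hL)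
    have hσR : min R (-L) ≤ R := min_le_left _ _
    have hσL : L ≤ -min R (-L) := le_neg.2 (min_le_right _ _)
    have hodd := hG.map_neg ⟨hL.le, hR.le⟩ ⟨by linarith, hσR⟩ ⟨hσL, by linarith⟩
    rw [hpos _ ⟨hσ.le, hσR⟩, hneg _ ⟨hσL, by linarith⟩, mul_neg, neg_inj] at hodd
    exact mul_right_cancel₀ hσ.ne' hodd
  refine ⟨G R / R, fun t ht => ?_⟩
  rcases le_total 0 t with h | h
  · exact hpos t ⟨h, ht.2⟩
  · rw [hneg t ⟨ht.1, h⟩, hslope]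

end IsAdditiveOn

theorem mul_exp_mem_Icc_iff {a IL IR t : ℝ} (ha : 0 < a) (hIL : 0 < IL) (hIR : 0 < IR) :
    a * exp t ∈ Icc IL IR ↔ t ∈ Icc (log (IL / a)) (log (IR / a)) := by
  rw [mem_Icc, mem_Icc, log_le_iff_le_exp (div_pos hIL ha), le_log_iff_exp_le (div_pos hIR ha),
    div_le_iff₀' ha, le_div_iff₀' ha]

theorem cauchy_on_interval_general (IL IR a : ℝ) (hIL : 0 < IL)
    (ha : a ∈ Set.Ioo IL IR) (F : ℝ → ℝ) (hF : ContinuousOn F (Set.Icc IL IR))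
    (hfun : ∀ x₁ ∈ Set.Icc IL IR, ∀ x₂ ∈ Set.Icc IL IR, ∀ x₃ ∈ Set.Icc IL IR,
      x₁ * x₂ = x₃ * a → F x₁ + F x₂ = F x₃ + F a) :
    ∃ c : ℝ, ∀ x ∈ Set.Icc IL IR, F x = c * Real.log (x / a) + F a := by
  have ha0 : 0 < a := hIL.trans ha.1
  have hmem : ∀ t, a * exp t ∈ Icc IL IR ↔ t ∈ Icc (log (IL / a)) (log (IR / a)) :=
    fun t => mul_exp_mem_Icc_iff ha0 hIL (ha0.trans ha.2)
  set G : ℝ → ℝ := fun t => F (a * exp t) - F a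
  have hG : IsAdditiveOn G (Icc (log (IL / a)) (log (IR / a))) := by
    intro s hs t ht hst
    have h := hfun _ ((hmem s).2 hs) _ ((hmem t).2 ht) _ ((hmem _).2 hst)
      (by rw [exp_add]; ring)
    simp only [G]
    linarith
  have hGc : ContinuousOn G (Icc (log (IL / a)) (log (IR / a))) :=
    (hF.comp (by fun_prop) fun t ht => (hmem t).2 ht).sub continuousOn_const
  obtain ⟨c, hc⟩ := hG.exists_eq_mul_of_continuousOn hGc
    (log_neg (div_pos hIL ha0) ((div_lt_one ha0).2 ha.1))
    (log_pos ((one_lt_div ha0).2 ha.2))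
  refine ⟨c, fun x hx => ?_⟩
  have hxa : a * exp (log (x / a)) = x := by
    rw [exp_log (div_pos (hIL.trans_le hx.1) ha0), mul_div_cancel₀ x ha0.ne']
  have h := hc _ ((hmem _).1 (hxa ▸ hx))
  simp only [G, hxa] at h
  linarith

/-- Let `I = [I_L, I_R]` with `0 < I_L < I_R`, let `a ∈ (I_L, I_R)`, and
let `F : I → ℝ` be continuous.  If `F(x₁) + F(x₂) = F(x₃) + F(a)` whenever `x₁,x₂,x₃ ∈ I`
satisfy `x₁x₂ = x₃a`, then `F(x) = c·log(x/a) + F(a)` on `I` for some constant `c`. -/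
theorem cauchy_on_interval (IL IR a : ℝ) (hIL : 0 < IL) (hIR : IL < IR)
    (ha : a ∈ Set.Ioo IL IR) (F : ℝ → ℝ) (hF : ContinuousOn F (Set.Icc IL IR))
    (hfun : ∀ x₁ ∈ Set.Icc IL IR, ∀ x₂ ∈ Set.Icc IL IR, ∀ x₃ ∈ Set.Icc IL IR,
      x₁ * x₂ = x₃ * a → F x₁ + F x₂ = F x₃ + F a) :
    ∃ c : ℝ, ∀ x ∈ Set.Icc IL IR, F x = c * Real.log (x / a) + F a :=
  cauchy_on_interval_general IL IR a hIL ha F hF hfun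
end

section
/- Let (β,γ) be antiferromagnetic and λ > 0, and let x* be the unique positive solution of x = (1 + γλx²)/(β + λx²). Let I ⊆ (0,∞) be a set with x* ∈ I, and let F : (0,∞) → ℝ satisfy, for all x₁, x₂ ∈ I, the functional equation F((1 + γλx₁x₂)/(β + λx₁x₂)) = 1 − ((1 − βγ)λx₁x₂)/((1 + γλx₁x₂)(β + λx₁x₂))·(F(x₁) + F(x₂) − 1). Then for all x₁, x₂, x₃ ∈ I with x₁x₂ = x₃·x* one has F(x₁) + F(x₂) = F(x₃) + F(x*). -/
/-- Let `(β,γ)` be antiferromagnetic, `λ > 0`, and `x*` the unique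
positive fixpoint of `x ↦ (1 + γλx²)/(β + λx²)`.  Let `I ⊆ (0,∞)` contain `x*` and let
`F` satisfy, for all `x₁,x₂ ∈ I`, the functional equation
`F((1+γλx₁x₂)/(β+λx₁x₂)) = 1 − ((1−βγ)λx₁x₂)/((1+γλx₁x₂)(β+λx₁x₂))·(F(x₁)+F(x₂)−1)`.
Then `F(x₁) + F(x₂) = F(x₃) + F(x*)` whenever `x₁,x₂,x₃ ∈ I` with `x₁x₂ = x₃x*`. -/
theorem functional_equation_additive (β γ lam xs : ℝ) (hanti : Antiferro β γ)
    (hlam : 0 < lam) (hxs : 0 < xs)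
    (hfix : xs = (1 + γ * lam * xs ^ 2) / (β + lam * xs ^ 2))
    (I : Set ℝ) (hI : I ⊆ Set.Ioi 0) (hxsI : xs ∈ I) (F : ℝ → ℝ)
    (hfun : ∀ x₁ ∈ I, ∀ x₂ ∈ I,
      F ((1 + γ * lam * (x₁ * x₂)) / (β + lam * (x₁ * x₂))) =
        1 - (1 - β * γ) * lam * (x₁ * x₂) /
            ((1 + γ * lam * (x₁ * x₂)) * (β + lam * (x₁ * x₂))) * (F x₁ + F x₂ - 1)) :
    ∀ x₁ ∈ I, ∀ x₂ ∈ I, ∀ x₃ ∈ I, x₁ * x₂ = x₃ * xs → F x₁ + F x₂ = F x₃ + F xs := by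
  obtain ⟨hβ, hγ, hβγ, -⟩ := hanti
  intro x₁ h1 x₂ h2 x₃ h3 hprod
  have e1 := hfun x₁ h1 x₂ h2
  have e2 := hfun x₃ h3 xs hxsI
  rw [hprod] at e1
  have hp : 0 < x₃ * xs := mul_pos (hI h3) hxs
  have hc : 0 < (1 - β * γ) * lam * (x₃ * xs) /
      ((1 + γ * lam * (x₃ * xs)) * (β + lam * (x₃ * xs))) := by
    apply div_pos
    · exact mul_pos (mul_pos (by linarith) hlam) hp
    · exact mul_pos (by nlinarith [mul_pos hlam hp]) (by nlinarith [mul_pos hlam hp])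
  have key : (1 - β * γ) * lam * (x₃ * xs) /
      ((1 + γ * lam * (x₃ * xs)) * (β + lam * (x₃ * xs))) * (F x₁ + F x₂ - 1) =
      (1 - β * γ) * lam * (x₃ * xs) /
      ((1 + γ * lam * (x₃ * xs)) * (β + lam * (x₃ * xs))) * (F x₃ + F xs - 1) := by
    linarith [e1.symm.trans e2]
  have := mul_left_cancel₀ hc.ne' key
  linarith
end

section
/- Let (β,γ) be antiferromagnetic and λ > 0, let x* be the unique positive solution of x = (1 + γλx²)/(β + λx²), and let I be a nondegenerate interval of positive reals. Then there do not exist constants c, K ∈ ℝ such that the function F(x) := c·log(x/x*) + K satisfies, for all y ∈ I, the equation F((1 + γλx*y)/(β + λx*y)) = 1 − ((1 − βγ)λx*y)/((1 + γλx*y)(β + λx*y))·(F(x*) + F(y) − 1). -/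
/-!
Put `w = λx*`, `r(y) = (1 + γwy)/(β + wy)` and `g(y) = (1 - βγ)wy/((1 + γwy)(β + wy))`.
The point is the identity `r'/r = -g/y`: differentiating `F(r(y)) = 1 - g(y)(F(x*) + F(y) - 1)`
for `F = c log(·/x*) + K`, the two terms carrying `c/y` cancel and what is left is
`g'(y)(F(x*) + F(y) - 1) = 0`. Now `g'(y)` is a nonzero multiple of `β - γw²y²`, and
`F(x*) + F(y) - 1` is affine in `log y`; each has at most one positive zero (unless `c = 0` and
`K = 1/2`, which violates the equation outright), so their product cannot vanish on an interval.
-/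

open Real Set Filter Topology

namespace TwoSpin

noncomputable section
variable (β γ w : ℝ)

def ratio (y : ℝ) : ℝ := (1 + γ * (w * y)) / (β + w * y)

def weight (y : ℝ) : ℝ := (1 - β * γ) * (w * y) / ((1 + γ * (w * y)) * (β + w * y))

variable {β γ w} {y : ℝ}

lemma ratio_pos (hβ : 0 ≤ β) (hγ : 0 ≤ γ) (hw : 0 < w) (hy : 0 < y) : 0 < ratio β γ w y :=
  div_pos (by nlinarith [mul_pos hw hy]) (by nlinarith [mul_pos hw hy])

lemma hasDerivAt_log_ratio (hN : 1 + γ * (w * y) ≠ 0) (hM : β + w * y ≠ 0) (hy : y ≠ 0) :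
    HasDerivAt (fun t => log (ratio β γ w t)) (-(weight β γ w y / y)) y := by
  have hN' : HasDerivAt (fun t => 1 + γ * (w * t)) (γ * w) y := by
    simpa using (((hasDerivAt_id y).const_mul w).const_mul γ).const_add 1
  have hM' : HasDerivAt (fun t => β + w * t) w y := by
    simpa using ((hasDerivAt_id y).const_mul w).const_add β
  refine ((hN'.div hM' hM).log (div_ne_zero hN hM)).congr_deriv ?_
  unfold weight
  simp only [Pi.div_apply]
  field_simp
  ring

lemma hasDerivAt_weight (hN : 1 + γ * (w * y) ≠ 0) (hM : β + w * y ≠ 0) :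
    HasDerivAt (weight β γ w)
      ((1 - β * γ) * w * (β - γ * w ^ 2 * y ^ 2) / ((1 + γ * (w * y)) * (β + w * y)) ^ 2) y := by
  have hnum : HasDerivAt (fun t => (1 - β * γ) * (w * t)) ((1 - β * γ) * w) y := by
    simpa using ((hasDerivAt_id y).const_mul w).const_mul (1 - β * γ)
  have hN' : HasDerivAt (fun t => 1 + γ * (w * t)) (γ * w) y := by
    simpa using (((hasDerivAt_id y).const_mul w).const_mul γ).const_add 1
  have hM' : HasDerivAt (fun t => β + w * t) w y := by
    simpa using ((hasDerivAt_id y).const_mul w).const_add β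
  refine (hnum.div (hN'.mul hM') (mul_ne_zero hN hM)).congr_deriv ?_
  simp only [Pi.mul_apply]
  field_simp
  ring

lemma mul_eq_zero_of_eventuallyEq {c A B : ℝ} (hβγ : β * γ ≠ 1) (hw : w ≠ 0)
    (hN : 1 + γ * (w * y) ≠ 0) (hM : β + w * y ≠ 0) (hy : y ≠ 0)
    (heq : (fun t => c * log (ratio β γ w t) + B) =ᶠ[𝓝 y]
      fun t => 1 - weight β γ w t * (A + c * log t)) :
    (β - γ * w ^ 2 * y ^ 2) * (A + c * log y) = 0 := by
  have hlhs := ((hasDerivAt_log_ratio hN hM hy).const_mul c).add_const B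
  have hrhs := ((hasDerivAt_weight hN hM).mul
    (((hasDerivAt_log hy).const_mul c).const_add A)).const_sub 1
  have hderiv := hlhs.unique (hrhs.congr_of_eventuallyEq heq)
  have hprod : (1 - β * γ) * w / ((1 + γ * (w * y)) * (β + w * y)) ^ 2 *
      ((β - γ * w ^ 2 * y ^ 2) * (A + c * log y)) = 0 := by
    linear_combination hderiv
  refine (mul_eq_zero.mp hprod).resolve_left ?_
  exact div_ne_zero (mul_ne_zero (sub_ne_zero.mpr hβγ.symm) hw)
    (pow_ne_zero _ (mul_ne_zero hN hM))

end

lemma subsingleton_pos_roots_sub_mul_sq {p q : ℝ} (h : p ≠ 0 ∨ q ≠ 0) :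
    {y : ℝ | 0 < y ∧ p - q * y ^ 2 = 0}.Subsingleton := by
  rintro y₁ ⟨hy₁, e₁⟩ y₂ ⟨hy₂, e₂⟩
  have hq : q ≠ 0 := fun hq => h.elim (fun hp => hp (by simpa [hq] using e₁)) (· hq)
  have hsq : y₁ ^ 2 = y₂ ^ 2 := mul_left_cancel₀ hq (by linarith)
  exact (sq_eq_sq₀ hy₁.le hy₂.le).mp hsq

lemma subsingleton_pos_roots_add_mul_log {A c : ℝ} (h : A ≠ 0 ∨ c ≠ 0) :
    {y : ℝ | 0 < y ∧ A + c * log y = 0}.Subsingleton := by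
  rintro y₁ ⟨hy₁, e₁⟩ y₂ ⟨hy₂, e₂⟩
  have hc : c ≠ 0 := fun hc => h.elim (fun hA => hA (by simpa [hc] using e₁)) (· hc)
  exact log_injOn_pos hy₁ hy₂ (mul_left_cancel₀ hc (by linarith))

theorem not_forall_Ioo_eq {β γ w c A B a b : ℝ} (hβ : 0 ≤ β) (hγ : 0 ≤ γ) (hβγ : β * γ < 1)
    (hne : β ≠ 0 ∨ γ ≠ 0) (hw : 0 < w) (ha : 0 ≤ a) (hab : a < b) (hAc : A ≠ 0 ∨ c ≠ 0) :
    ¬ ∀ y ∈ Ioo a b, c * log (ratio β γ w y) + B = 1 - weight β γ w y * (A + c * log y) := by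
  intro heq
  have hroots : Ioo a b ⊆ {y | 0 < y ∧ β - γ * w ^ 2 * y ^ 2 = 0} ∪
      {y | 0 < y ∧ A + c * log y = 0} := by
    intro y hy
    have hy₀ : 0 < y := ha.trans_lt hy.1
    have hN : 0 < 1 + γ * (w * y) := by nlinarith [mul_pos hw hy₀]
    have hM : 0 < β + w * y := by nlinarith [mul_pos hw hy₀]
    have hev := eventually_of_mem (Ioo_mem_nhds hy.1 hy.2) heq
    rcases mul_eq_zero.mp (mul_eq_zero_of_eventuallyEq hβγ.ne hw.ne' hN.ne' hM.ne' hy₀.ne' hev)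
      with h | h
    exacts [Or.inl ⟨hy₀, h⟩, Or.inr ⟨hy₀, h⟩]
  have hquad : β ≠ 0 ∨ γ * w ^ 2 ≠ 0 := hne.imp_right fun hγ => mul_ne_zero hγ (by positivity)
  exact Ioo_infinite hab (((subsingleton_pos_roots_sub_mul_sq hquad).finite.union
    (subsingleton_pos_roots_add_mul_log hAc).finite).subset hroots)

lemma log_ansatz_eq_iff {β γ lam xs c K y : ℝ} (hxs : xs ≠ 0) (hy : y ≠ 0)
    (hr : ratio β γ (lam * xs) y ≠ 0) :
    (fun x => c * log (x / xs) + K) ((1 + γ * lam * (xs * y)) / (β + lam * (xs * y))) =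
        1 - (1 - β * γ) * lam * (xs * y) /
            ((1 + γ * lam * (xs * y)) * (β + lam * (xs * y))) *
          ((fun x => c * log (x / xs) + K) xs + (fun x => c * log (x / xs) + K) y - 1) ↔
      c * log (ratio β γ (lam * xs) y) + (K - c * log xs) =
        1 - weight β γ (lam * xs) y * ((2 * K - c * log xs - 1) + c * log y) := by
  have hratio : (1 + γ * lam * (xs * y)) / (β + lam * (xs * y)) = ratio β γ (lam * xs) y := by
    unfold ratio; ring_nf
  have hweight : (1 - β * γ) * lam * (xs * y) / ((1 + γ * lam * (xs * y)) * (β + lam * (xs * y)))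
      = weight β γ (lam * xs) y := by
    unfold weight; ring_nf
  simp only [hratio, hweight, log_div hr hxs, log_div hy hxs, div_self hxs, log_one]
  constructor <;> intro h <;> linear_combination h

end TwoSpin

open TwoSpin

theorem no_logarithmic_solution_general (β γ lam xs : ℝ) (hanti : Antiferro β γ) (hlam : 0 < lam)
    (hxs : 0 < xs)
    (I : Set ℝ) (hIpos : I ⊆ Set.Ioi 0) (hIconn : I.OrdConnected)
    (hInd : ∃ a ∈ I, ∃ b ∈ I, a < b) :
    ¬ ∃ c K : ℝ, ∀ y ∈ I,
      (fun x => c * Real.log (x / xs) + K) ((1 + γ * lam * (xs * y)) / (β + lam * (xs * y))) =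
        1 - (1 - β * γ) * lam * (xs * y) /
            ((1 + γ * lam * (xs * y)) * (β + lam * (xs * y))) *
          ((fun x => c * Real.log (x / xs) + K) xs +
            (fun x => c * Real.log (x / xs) + K) y - 1) := by
  obtain ⟨hβ, hγ, hβγ, hne⟩ := hanti
  rintro ⟨c, K, h⟩
  obtain ⟨a, haI, b, hbI, hab⟩ := hInd
  have hw : 0 < lam * xs := mul_pos hlam hxs
  have hreduced : ∀ y ∈ I, c * log (ratio β γ (lam * xs) y) + (K - c * log xs) =
      1 - weight β γ (lam * xs) y * ((2 * K - c * log xs - 1) + c * log y) := fun y hy =>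
    (log_ansatz_eq_iff hxs.ne' (hIpos hy).ne' (ratio_pos hβ hγ hw (hIpos hy)).ne').mp (h y hy)
  have hAc : 2 * K - c * log xs - 1 ≠ 0 ∨ c ≠ 0 := by
    by_contra! ⟨hA, rfl⟩
    have ha := hreduced a haI
    simp only [zero_mul, zero_add, add_zero, sub_zero] at ha hA
    rw [hA, mul_zero, sub_zero] at ha
    linarith
  exact not_forall_Ioo_eq hβ hγ hβγ hne hw (hIpos haI).le hab hAc fun y hy =>
    hreduced y (hIconn.out haI hbI (Ioo_subset_Icc_self hy))

/-- Let `(β,γ)` be antiferromagnetic, `λ > 0`, `x*` the unique positive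
fixpoint of `x ↦ (1 + γλx²)/(β + λx²)`, and let `I` be a nondegenerate interval of positive
reals.  Then no function of the form `F(x) = c·log(x/x*) + K` satisfies, for all `y ∈ I`,
`F((1+γλx*y)/(β+λx*y)) = 1 − ((1−βγ)λx*y)/((1+γλx*y)(β+λx*y))·(F(x*) + F(y) − 1)`. -/
theorem no_logarithmic_solution (β γ lam xs : ℝ) (hanti : Antiferro β γ) (hlam : 0 < lam)
    (hxs : 0 < xs) (hfix : xs = (1 + γ * lam * xs ^ 2) / (β + lam * xs ^ 2))
    (I : Set ℝ) (hIpos : I ⊆ Set.Ioi 0) (hIconn : I.OrdConnected)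
    (hInd : ∃ a ∈ I, ∃ b ∈ I, a < b) :
    ¬ ∃ c K : ℝ, ∀ y ∈ I,
      (fun x => c * Real.log (x / xs) + K) ((1 + γ * lam * (xs * y)) / (β + lam * (xs * y))) =
        1 - (1 - β * γ) * lam * (xs * y) /
            ((1 + γ * lam * (xs * y)) * (β + lam * (xs * y))) *
          ((fun x => c * Real.log (x / xs) + K) xs +
            (fun x => c * Real.log (x / xs) + K) y - 1) :=
  no_logarithmic_solution_general β γ lam xs hanti hlam hxs I hIpos hIconn hInd
end

section
/- Let (β,γ) be antiferromagnetic and let I be a closed bounded interval of positive reals. Let R₁,…,R_k and Q₀ be twice continuously differentiable functions from I into the open interval (γ, 1/β) (where 1/β is interpreted as +∞ if β = 0). For each m ≥ 0 and each sequence a₀,…,a_{m−1} ∈ {1,…,k}, define functions Q₁,…,Q_m on I by Q_{i+1}(λ) = (1 + γλ·R_{a_i}(λ)·Q_i(λ))/(β + λ·R_{a_i}(λ)·Q_i(λ)). Then there exist bounded intervals I₁ and I₂, depending only on β, γ, I, R₁,…,R_k and Q₀ (but not on m or on the sequence a), such that each Q_m is twice continuously differentiable and for every λ ∈ I one has Q_m'(λ)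 ∈ I₁ and Q_m''(λ) ∈ I₂. -/
/-- The sequence of functions `Q₀, Q₁, Q₂, …` determined by a sequence `a` of indices via
`Q_{i+1}(λ) = (1 + γλ·R_{a_i}(λ)·Q_i(λ))/(β + λ·R_{a_i}(λ)·Q_i(λ))`. -/
noncomputable def Qseq (β γ : ℝ) {k : ℕ} (R : Fin k → ℝ → ℝ) (Q₀ : ℝ → ℝ)
    (a : ℕ → Fin k) : ℕ → ℝ → ℝ
  | 0 => Q₀
  | (m + 1) => fun lam =>
      (1 + γ * lam * R (a m) lam * Qseq β γ R Q₀ a m lam) /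
        (β + lam * R (a m) lam * Qseq β γ R Q₀ a m lam)

/-!
Write `Q_{m+1} = f (s_m)` with `f t = (1 + γ t) / (β + t)` and `s_m λ = λ R_{a_m}(λ) Q_m(λ)`.
Since `f t = γ + (1 - βγ) / (β + t)` is decreasing, all `Q_m` stay in a fixed interval `[γ, B]`,
so `s_m` ranges over a fixed compact interval of positive reals. There the elasticity
`t f'(t) / f(t) = -(1 - βγ) t / ((1 + γ t)(β + t))` has absolute value at most some `κ < 1`,
because `(1 + γ t)(β + t) - (1 - βγ) t = β + 2βγ t + γ t² > 0`. Consequently the relative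
derivatives `Q_m' / Q_m` obey `|Q_{m+1}' / Q_{m+1}| ≤ c + κ |Q_m' / Q_m|`, and, once these are
bounded, `Q_m'' / Q_m` obeys a recursion of the same shape; any `M ≥ c + κ M` is then an
inductive bound.
-/

open Set

section SecondDerivative

variable {S : Set ℝ} {f f' f'' g g' g'' : ℝ → ℝ}

def HasDeriv2WithinOn (f f' f'' : ℝ → ℝ) (S : Set ℝ) : Prop :=
  ∀ x ∈ S, HasDerivWithinAt f (f' x) S x ∧ HasDerivWithinAt f' (f'' x) S x

theorem ContDiffOn.hasDeriv2WithinOn (hf : ContDiffOn ℝ 2 f S) (hS : UniqueDiffOn ℝ S) :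
    HasDeriv2WithinOn f (derivWithin f S) (derivWithin (derivWithin f S) S) S := fun x hx =>
  ⟨(hf.differentiableOn two_ne_zero x hx).hasDerivWithinAt,
    ((hf.derivWithin hS (m := 1) le_rfl).differentiableOn one_ne_zero x hx).hasDerivWithinAt⟩

namespace HasDeriv2WithinOn

theorem derivWithin_eq (h : HasDeriv2WithinOn f f' f'' S) (hS : UniqueDiffOn ℝ S) {x : ℝ}
    (hx : x ∈ S) : derivWithin f S x = f' x :=
  (h x hx).1.derivWithin (hS x hx)

theorem derivWithin_derivWithin_eq (h : HasDeriv2WithinOn f f' f'' S) (hS : UniqueDiffOn ℝ S)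
    {x : ℝ} (hx : x ∈ S) : derivWithin (derivWithin f S) S x = f'' x := by
  rw [derivWithin_congr (fun y hy => h.derivWithin_eq hS hy) (h.derivWithin_eq hS hx)]
  exact (h x hx).2.derivWithin (hS x hx)

theorem mul (hf : HasDeriv2WithinOn f f' f'' S) (hg : HasDeriv2WithinOn g g' g'' S) :
    HasDeriv2WithinOn (fun x => f x * g x) (fun x => f' x * g x + f x * g' x)
      (fun x => f'' x * g x + 2 * (f' x * g' x) + f x * g'' x) S := fun x hx => by
  obtain ⟨hf1, hf2⟩ := hf x hx
  obtain ⟨hg1, hg2⟩ := hg x hx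
  refine ⟨hf1.mul hg1, ((hf2.mul hg1).add (hf1.mul hg2)).congr_deriv ?_⟩
  ring

theorem comp {φ φ' φ'' : ℝ → ℝ} (hg : HasDeriv2WithinOn g g' g'' S)
    (hφ : ∀ x ∈ S, HasDerivAt φ (φ' (g x)) (g x) ∧ HasDerivAt φ' (φ'' (g x)) (g x)) :
    HasDeriv2WithinOn (fun x => φ (g x)) (fun x => φ' (g x) * g' x)
      (fun x => φ'' (g x) * g' x ^ 2 + φ' (g x) * g'' x) S := fun x hx => by
  obtain ⟨hg1, hg2⟩ := hg x hx
  obtain ⟨hφ1, hφ2⟩ := hφ x hx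
  refine ⟨hφ1.comp_hasDerivWithinAt x hg1, ?_⟩
  exact ((hφ2.comp_hasDerivWithinAt x hg1).mul hg2).congr_deriv
    (by simp only [Function.comp_apply]; ring)

end HasDeriv2WithinOn

theorem IsCompact.exists_bound_of_contDiffOn_two {ι : Type*} [Finite ι] (hK : IsCompact S)
    (hS : UniqueDiffOn ℝ S) {f : ι → ℝ → ℝ} (hf : ∀ i, ContDiffOn ℝ 2 (f i) S) :
    ∃ C, ∀ i, ∀ x ∈ S, |f i x| ≤ C ∧ |derivWithin (f i) S x| ≤ C ∧
      |derivWithin (derivWithin (f i) S) S x| ≤ C := by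
  have hbound : ∀ i, ∃ C, ∀ x ∈ S, |f i x| ≤ C ∧ |derivWithin (f i) S x| ≤ C ∧
      |derivWithin (derivWithin (f i) S) S x| ≤ C := fun i => by
    have hf' := (hf i).derivWithin hS (m := 1) le_rfl
    obtain ⟨C₀, h₀⟩ := hK.exists_bound_of_continuousOn (hf i).continuousOn
    obtain ⟨C₁, h₁⟩ := hK.exists_bound_of_continuousOn hf'.continuousOn
    obtain ⟨C₂, h₂⟩ := hK.exists_bound_of_continuousOn (hf'.continuousOn_derivWithin hS le_rfl)
    refine ⟨max C₀ (max C₁ C₂), fun x hx => ?_⟩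
    simp only [← Real.norm_eq_abs, le_max_iff]
    exact ⟨.inl (h₀ x hx), .inr (.inl (h₁ x hx)), .inr (.inr (h₂ x hx))⟩
  choose C hC using hbound
  obtain ⟨M, hM⟩ := Finite.exists_le C
  exact ⟨M, fun i x hx =>
    ⟨(hC i x hx).1.trans (hM i), (hC i x hx).2.1.trans (hM i), (hC i x hx).2.2.trans (hM i)⟩⟩

end SecondDerivative

section Mobius

variable {β γ σ t : ℝ}

noncomputable def mobius (β γ t : ℝ) : ℝ := (1 + γ * t) / (β + t)

noncomputable def mobiusDeriv (β γ t : ℝ) : ℝ := -(1 - β * γ) / (β + t) ^ 2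

noncomputable def mobiusDeriv2 (β γ t : ℝ) : ℝ := 2 * (1 - β * γ) / (β + t) ^ 3

/-- Minus the logarithmic derivative of `mobius β γ`. -/
noncomputable def mobiusRate (β γ t : ℝ) : ℝ := (1 - β * γ) / ((1 + γ * t) * (β + t))

theorem hasDerivAt_mobius (ht : β + t ≠ 0) :
    HasDerivAt (mobius β γ) (mobiusDeriv β γ t) t := by
  have h := (((hasDerivAt_id t).const_mul γ).const_add 1).div
    ((hasDerivAt_id t).const_add β) ht
  refine h.congr_deriv ?_
  simp only [mobiusDeriv, id]
  field_simp
  ring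

theorem hasDerivAt_mobiusDeriv (ht : β + t ≠ 0) :
    HasDerivAt (mobiusDeriv β γ) (mobiusDeriv2 β γ t) t := by
  have h := (hasDerivAt_const t (-(1 - β * γ))).div
    (((hasDerivAt_id t).const_add β).pow 2) (pow_ne_zero 2 ht)
  refine h.congr_deriv ?_
  simp only [mobiusDeriv2, id, Pi.pow_apply]
  field_simp
  ring

theorem mobius_eq_add_div (ht : β + t ≠ 0) : mobius β γ t = γ + (1 - β * γ) / (β + t) := by
  rw [mobius]
  field_simp
  ring

theorem le_mobius (hβγ : β * γ < 1) (ht : 0 < β + t) : γ ≤ mobius β γ t := by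
  rw [mobius_eq_add_div ht.ne']
  have := div_pos (sub_pos.2 hβγ) ht
  linarith

theorem mobius_le_mobius (hβγ : β * γ < 1) (hσ : 0 < β + σ) (hσt : σ ≤ t) :
    mobius β γ t ≤ mobius β γ σ := by
  rw [mobius_eq_add_div hσ.ne', mobius_eq_add_div (by linarith)]
  gcongr

theorem abs_mobiusDeriv (hβγ : β * γ < 1) (ht : 0 < β + t) (hγt : 0 < 1 + γ * t) :
    |mobiusDeriv β γ t| = mobius β γ t * mobiusRate β γ t := by
  rw [mobiusDeriv, abs_div, abs_neg, abs_of_pos (sub_pos.2 hβγ), abs_of_pos (by positivity),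
    mobius, mobiusRate]
  field_simp

theorem abs_mobiusDeriv2 (hβγ : β * γ < 1) (ht : 0 < β + t) (hγt : 0 < 1 + γ * t) :
    |mobiusDeriv2 β γ t| = 2 * (mobius β γ t * mobiusRate β γ t) / (β + t) := by
  have : 0 < 1 - β * γ := sub_pos.2 hβγ
  rw [mobiusDeriv2, abs_of_pos (by positivity), mobius, mobiusRate]
  field_simp

theorem mobiusRate_le (hβγ : β * γ < 1) (hγ : 0 ≤ γ) (hσ : 0 < β + σ) (ht : 0 ≤ t)
    (hσt : σ ≤ t) : mobiusRate β γ t ≤ (1 - β * γ) / (β + σ) := by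
  have : 0 < 1 - β * γ := sub_pos.2 hβγ
  rw [mobiusRate]
  gcongr
  nlinarith [mul_nonneg hγ ht]

theorem exists_mul_mobiusRate_le (hβ : 0 ≤ β) (hγ : 0 ≤ γ) (hσ : 0 ≤ σ)
    (hβσ : 0 < β + σ) (hη : 0 < β + γ * σ ^ 2) (τ : ℝ) :
    ∃ κ < 1, ∀ t ∈ Icc σ τ, t * mobiusRate β γ t ≤ κ := by
  set τ' := max τ σ
  have hτ' : 0 ≤ τ' := hσ.trans (le_max_right _ _)
  have hD : 0 < (1 + γ * τ') * (β + τ') := by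
    have : 0 < β + τ' := by linarith [le_max_right τ σ]
    positivity
  refine ⟨1 - (β + γ * σ ^ 2) / ((1 + γ * τ') * (β + τ')), by linarith [div_pos hη hD],
    fun t ⟨hσt, htτ⟩ => ?_⟩
  have ht : 0 ≤ t := hσ.trans hσt
  have htτ' : t ≤ τ' := htτ.trans (le_max_left _ _)
  have hgap : (1 - β * γ) * t + (β + γ * σ ^ 2) ≤ (1 + γ * t) * (β + t) := by
    nlinarith [mul_nonneg (mul_nonneg hβ hγ) ht, mul_le_mul hσt hσt hσ ht]
  have hDt : 0 < (1 + γ * t) * (β + t) := by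
    have : 0 < β + t := by linarith
    positivity
  have hDτ : (1 + γ * t) * (β + t) ≤ (1 + γ * τ') * (β + τ') := by gcongr
  have hshrink : (β + γ * σ ^ 2) * ((1 + γ * t) * (β + t)) / ((1 + γ * τ') * (β + τ'))
      ≤ β + γ * σ ^ 2 := by
    rw [div_le_iff₀ hD]
    gcongr
  rw [mobiusRate, mul_div_assoc', div_le_iff₀ hDt, sub_mul, div_mul_eq_mul_div]
  linarith

end Mobius

section MobiusEstimates

variable {β γ σ t κ c M : ℝ}

theorem mobiusRate_mul_add_le (hβγ : β * γ < 1) (hγ : 0 ≤ γ) (hσ : 0 < β + σ) (ht : 0 ≤ t)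
    (hσt : σ ≤ t) (hκ : t * mobiusRate β γ t ≤ κ) (hc : 0 ≤ c) (hM : 0 ≤ M) :
    mobiusRate β γ t * (c + M * t) ≤ (1 - β * γ) / (β + σ) * c + κ * M := by
  have hρ := mobiusRate_le hβγ hγ hσ ht hσt
  nlinarith [mul_le_mul_of_nonneg_right hρ hc, mul_le_mul_of_nonneg_left hκ hM]

theorem abs_mobiusDeriv_mul_le (hβγ : β * γ < 1) (hγ : 0 ≤ γ) (hσ : 0 < β + σ) (ht : 0 ≤ t)
    (hσt : σ ≤ t) (hκ : t * mobiusRate β γ t ≤ κ) (hc : 0 ≤ c) (hM : 0 ≤ M) {X : ℝ}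
    (hX : |X| ≤ c + M * t) :
    |mobiusDeriv β γ t * X| ≤ ((1 - β * γ) / (β + σ) * c + κ * M) * mobius β γ t := by
  have hβt : 0 < β + t := by linarith
  have hρ : 0 ≤ mobiusRate β γ t := div_nonneg (sub_nonneg.2 hβγ.le) (by positivity)
  have hf : 0 ≤ mobius β γ t := hγ.trans (le_mobius hβγ hβt)
  rw [abs_mul, abs_mobiusDeriv hβγ hβt (by positivity)]
  calc mobius β γ t * mobiusRate β γ t * |X|
      ≤ mobius β γ t * (mobiusRate β γ t * (c + M * t)) := by
        rw [mul_assoc]; gcongr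
    _ ≤ mobius β γ t * ((1 - β * γ) / (β + σ) * c + κ * M) := by
        gcongr; exact mobiusRate_mul_add_le hβγ hγ hσ ht hσt hκ hc hM
    _ = _ := mul_comm _ _

theorem abs_mobiusDeriv2_mul_add_le (hβγ : β * γ < 1) (hγ : 0 ≤ γ) (hσ : 0 < β + σ)
    (ht : 0 ≤ t) (hσt : σ ≤ t) (hκ : t * mobiusRate β γ t ≤ κ) (hc : 0 ≤ c) (hM : 0 ≤ M)
    {X Y K : ℝ} (hX : |X| ≤ K) (hY : |Y| ≤ c + M * t) :
    |mobiusDeriv2 β γ t * X ^ 2 + mobiusDeriv β γ t * Y|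
      ≤ ((1 - β * γ) / (β + σ) * (2 * K ^ 2 / (β + σ) + c) + κ * M) * mobius β γ t := by
  have hβt : 0 < β + t := by linarith
  have hγt : 0 < 1 + γ * t := by positivity
  have hρ : 0 ≤ mobiusRate β γ t := div_nonneg (sub_nonneg.2 hβγ.le) (by positivity)
  have hf : 0 ≤ mobius β γ t := hγ.trans (le_mobius hβγ hβt)
  have hX2 : 2 * X ^ 2 / (β + t) ≤ 2 * K ^ 2 / (β + σ) := by
    have : X ^ 2 ≤ K ^ 2 := by
      simpa only [sq_abs] using pow_le_pow_left₀ (abs_nonneg X) hX 2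
    gcongr
  have hc' : 0 ≤ 2 * K ^ 2 / (β + σ) + c := by positivity
  calc |mobiusDeriv2 β γ t * X ^ 2 + mobiusDeriv β γ t * Y|
      ≤ |mobiusDeriv2 β γ t| * X ^ 2 + |mobiusDeriv β γ t| * |Y| :=
        (abs_add_le _ _).trans_eq (by rw [abs_mul, abs_mul, abs_of_nonneg (sq_nonneg X)])
    _ = mobius β γ t * (mobiusRate β γ t * (2 * X ^ 2 / (β + t) + |Y|)) := by
        rw [abs_mobiusDeriv2 hβγ hβt hγt, abs_mobiusDeriv hβγ hβt hγt]
        ring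
    _ ≤ mobius β γ t * (mobiusRate β γ t * (2 * K ^ 2 / (β + σ) + c + M * t)) := by
        exact mul_le_mul_of_nonneg_left (mul_le_mul_of_nonneg_left (by linarith) hρ) hf
    _ ≤ mobius β γ t * ((1 - β * γ) / (β + σ) * (2 * K ^ 2 / (β + σ) + c) + κ * M) := by
        gcongr
        exact mobiusRate_mul_add_le hβγ hγ hσ ht hσt hκ hc' hM
    _ = _ := mul_comm _ _

end MobiusEstimates

theorem exists_nonneg_le_and_add_mul_le {κ : ℝ} (hκ : κ < 1) (a b : ℝ) :
    ∃ M, 0 ≤ M ∧ a ≤ M ∧ b + κ * M ≤ M := by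
  refine ⟨max (max a 0) (b / (1 - κ)), by simp, by simp, ?_⟩
  have h1κ : 0 < 1 - κ := sub_pos.2 hκ
  have : b ≤ (1 - κ) * max (max a 0) (b / (1 - κ)) := by
    rw [← div_le_iff₀' h1κ]
    exact le_max_right _ _
  linarith

theorem abs_mul_deriv_le {p p' q q' B C M : ℝ} (hp : 0 ≤ p) (hq : 0 ≤ q) (hqB : q ≤ B)
    (hp' : |p'| ≤ C) (hq' : |q'| ≤ M * q) : |p' * q + p * q'| ≤ C * B + M * (p * q) := by
  have hC : 0 ≤ C := (abs_nonneg _).trans hp'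
  calc |p' * q + p * q'| ≤ |p'| * q + p * |q'| := by
        simpa only [abs_mul, abs_of_nonneg hp, abs_of_nonneg hq] using abs_add_le (p' * q) (p * q')
    _ ≤ C * B + p * (M * q) := by gcongr
    _ = C * B + M * (p * q) := by ring

theorem abs_mul_deriv2_le {p p' p'' q q' q'' B C M₁ M₂ : ℝ} (hp : 0 ≤ p) (hq : 0 ≤ q)
    (hqB : q ≤ B) (hp' : |p'| ≤ C) (hp'' : |p''| ≤ C) (hM₁ : 0 ≤ M₁) (hq' : |q'| ≤ M₁ * q)
    (hq'' : |q''| ≤ M₂ * q) :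
    |p'' * q + 2 * (p' * q') + p * q''| ≤ C * B + 2 * C * M₁ * B + M₂ * (p * q) := by
  have hC : 0 ≤ C := (abs_nonneg _).trans hp'
  calc |p'' * q + 2 * (p' * q') + p * q''| ≤ |p''| * q + 2 * (|p'| * |q'|) + p * |q''| := by
        refine (abs_add_le _ _).trans (add_le_add ((abs_add_le _ _).trans_eq ?_) ?_)
        · rw [abs_mul, abs_mul, abs_mul, abs_of_nonneg hq, abs_two]
        · rw [abs_mul, abs_of_nonneg hp]
    _ ≤ C * B + 2 * (C * (M₁ * B)) + p * (M₂ * q) := by gcongr; exact hq'.trans (by gcongr)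
    _ = C * B + 2 * C * M₁ * B + M₂ * (p * q) := by ring

def DerivRelBounded (S : Set ℝ) (γ B M₁ M₂ : ℝ) (Q : ℝ → ℝ) : Prop :=
  ContDiffOn ℝ 2 Q S ∧ ∀ x ∈ S, γ ≤ Q x ∧ Q x ≤ B ∧
    |derivWithin Q S x| ≤ M₁ * Q x ∧ |derivWithin (derivWithin Q S) S x| ≤ M₂ * Q x

namespace DerivRelBounded

variable {S : Set ℝ} {β γ σ κ A B C M₁ M₂ : ℝ} {p Q : ℝ → ℝ}

theorem of_abs_le (hQ : ContDiffOn ℝ 2 Q S) (hA : 0 < A) (hQA : ∀ x ∈ S, γ ≤ Q x ∧ A ≤ Q x)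
    (hQC : ∀ x ∈ S, |Q x| ≤ C ∧ |derivWithin Q S x| ≤ C ∧
      |derivWithin (derivWithin Q S) S x| ≤ C)
    (hB : C ≤ B) (hM₁ : C / A ≤ M₁) (hM₂ : C / A ≤ M₂) :
    DerivRelBounded S γ B M₁ M₂ Q := by
  refine ⟨hQ, fun x hx => ?_⟩
  obtain ⟨hγQ, hAQ⟩ := hQA x hx
  obtain ⟨h₀, h₁, h₂⟩ := hQC x hx
  have hC : 0 ≤ C / A := div_nonneg ((abs_nonneg _).trans h₀) hA.le
  have hCQ : ∀ M, C / A ≤ M → C ≤ M * Q x := fun M hM =>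
    calc C = C / A * A := (div_mul_cancel₀ C hA.ne').symm
      _ ≤ M * Q x := mul_le_mul hM hAQ hA.le (hC.trans hM)
  exact ⟨hγQ, (le_abs_self _).trans (h₀.trans hB), h₁.trans (hCQ _ hM₁), h₂.trans (hCQ _ hM₂)⟩

theorem mobius_mul (hQ : DerivRelBounded S γ B M₁ M₂ Q) (hS : UniqueDiffOn ℝ S)
    (hp : ContDiffOn ℝ 2 p S)
    (hpb : ∀ x ∈ S, 0 ≤ p x ∧ σ ≤ γ * p x ∧ p x ≤ C ∧ |derivWithin p S x| ≤ C ∧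
      |derivWithin (derivWithin p S) S x| ≤ C)
    (hβγ : β * γ < 1) (hγ : 0 ≤ γ) (hβσ : 0 < β + σ) (hB : mobius β γ σ ≤ B)
    (hκ : ∀ t ∈ Icc σ (C * B), t * mobiusRate β γ t ≤ κ)
    (hM₁ : 0 ≤ M₁) (hM₁κ : (1 - β * γ) / (β + σ) * (C * B) + κ * M₁ ≤ M₁)
    (hM₂ : 0 ≤ M₂) (hM₂κ : (1 - β * γ) / (β + σ) *
      (2 * (C * B + M₁ * (C * B)) ^ 2 / (β + σ) + (C * B + 2 * C * M₁ * B)) + κ * M₂ ≤ M₂) :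
    DerivRelBounded S γ B M₁ M₂ (fun x => mobius β γ (p x * Q x)) := by
  obtain ⟨hQc, hQb⟩ := hQ
  have hrange : ∀ x ∈ S, σ ≤ p x * Q x ∧ p x * Q x ≤ C * B := fun x hx => by
    obtain ⟨hp0, hσp, hpC, -, -⟩ := hpb x hx
    obtain ⟨hγQ, hQB, -, -⟩ := hQb x hx
    exact ⟨hσp.trans (by rw [mul_comm]; gcongr), mul_le_mul hpC hQB (hγ.trans hγQ) (hp0.trans hpC)⟩
  have hne : ∀ x ∈ S, β + p x * Q x ≠ 0 := fun x hx => by linarith [(hrange x hx).1]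
  have hF := ((hp.hasDeriv2WithinOn hS).mul (hQc.hasDeriv2WithinOn hS)).comp
    (φ := mobius β γ) fun x hx => ⟨hasDerivAt_mobius (hne x hx), hasDerivAt_mobiusDeriv (hne x hx)⟩
  refine ⟨?_, fun x hx => ?_⟩
  · have hs := hp.mul hQc
    exact (contDiffOn_const.add (contDiffOn_const.mul hs)).div (contDiffOn_const.add hs) hne
  rw [hF.derivWithin_eq hS hx, hF.derivWithin_derivWithin_eq hS hx]
  obtain ⟨hp0, -, -, hp1, hp2⟩ := hpb x hx
  obtain ⟨hγQ, hQB, hQ1, hQ2⟩ := hQb x hx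
  obtain ⟨hσs, hsB⟩ := hrange x hx
  have hs0 : 0 ≤ p x * Q x := mul_nonneg hp0 (hγ.trans hγQ)
  have hC : 0 ≤ C := (abs_nonneg _).trans hp1
  have hB0 : 0 ≤ B := (hγ.trans hγQ).trans hQB
  have hf : 0 ≤ mobius β γ (p x * Q x) := hγ.trans (le_mobius hβγ (by linarith))
  have hs1 := abs_mul_deriv_le hp0 (hγ.trans hγQ) hQB hp1 hQ1
  have hs2 := abs_mul_deriv2_le hp0 (hγ.trans hγQ) hQB hp1 hp2 hM₁ hQ1 hQ2
  have hκx := hκ _ ⟨hσs, hsB⟩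
  refine ⟨le_mobius hβγ (by linarith), (mobius_le_mobius hβγ hβσ hσs).trans hB, ?_, ?_⟩
  · exact (abs_mobiusDeriv_mul_le hβγ hγ hβσ hs0 hσs hκx (by positivity) hM₁ hs1).trans
      (mul_le_mul_of_nonneg_right hM₁κ hf)
  · have hK : |_| ≤ C * B + M₁ * (C * B) := hs1.trans (by gcongr)
    exact (abs_mobiusDeriv2_mul_add_le hβγ hγ hβσ hs0 hσs hκx (by positivity) hM₂ hK hs2).trans
      (mul_le_mul_of_nonneg_right hM₂κ hf)

theorem derivWithin_mem_Icc (h : DerivRelBounded S γ B M₁ M₂ Q) (hM₁ : 0 ≤ M₁) (hM₂ : 0 ≤ M₂)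
    {x : ℝ} (hx : x ∈ S) :
    derivWithin Q S x ∈ Icc (-(M₁ * B)) (M₁ * B) ∧
      derivWithin (derivWithin Q S) S x ∈ Icc (-(M₂ * B)) (M₂ * B) := by
  obtain ⟨-, hQB, h₁, h₂⟩ := h.2 x hx
  exact ⟨abs_le.1 (h₁.trans (by gcongr)), abs_le.1 (h₂.trans (by gcongr))⟩

end DerivRelBounded

theorem exists_derivRelBounded_mobius_mul_invariant {S : Set ℝ} {β γ σ : ℝ}
    (hS : UniqueDiffOn ℝ S) (hβ : 0 ≤ β) (hγ : 0 ≤ γ) (hβγ : β * γ < 1) (hσ : 0 ≤ σ)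
    (hβσ : 0 < β + σ) (hη : 0 < β + γ * σ ^ 2) (C B₀ M₀ : ℝ) :
    ∃ B M₁ M₂, B₀ ≤ B ∧ 0 ≤ M₁ ∧ M₀ ≤ M₁ ∧ 0 ≤ M₂ ∧ M₀ ≤ M₂ ∧
      ∀ p Q : ℝ → ℝ, ContDiffOn ℝ 2 p S →
        (∀ x ∈ S, 0 ≤ p x ∧ σ ≤ γ * p x ∧ p x ≤ C ∧ |derivWithin p S x| ≤ C ∧
          |derivWithin (derivWithin p S) S x| ≤ C) →
        DerivRelBounded S γ B M₁ M₂ Q →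
        DerivRelBounded S γ B M₁ M₂ (fun x => mobius β γ (p x * Q x)) := by
  set B := max B₀ (mobius β γ σ)
  obtain ⟨κ, hκ1, hκ⟩ := exists_mul_mobiusRate_le hβ hγ hσ hβσ hη (C * B)
  obtain ⟨M₁, hM₁, hM₀₁, hM₁κ⟩ :=
    exists_nonneg_le_and_add_mul_le hκ1 M₀ ((1 - β * γ) / (β + σ) * (C * B))
  obtain ⟨M₂, hM₂, hM₀₂, hM₂κ⟩ := exists_nonneg_le_and_add_mul_le hκ1 M₀
    ((1 - β * γ) / (β + σ) * (2 * (C * B + M₁ * (C * B)) ^ 2 / (β + σ) + (C * B + 2 * C * M₁ * B)))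
  exact ⟨B, M₁, M₂, le_max_left _ _, hM₁, hM₀₁, hM₂, hM₀₂, fun p Q hp hpb hQ =>
    hQ.mobius_mul hS hp hpb hβγ hγ hβσ (le_max_right _ _) hκ hM₁ hM₁κ hM₂ hM₂κ⟩

theorem mul_nonneg_and_sq_le {lo x r γ : ℝ} (hlo : 0 < lo) (hx : lo ≤ x) (hγ : 0 ≤ γ)
    (hr : γ ≤ r) : 0 ≤ x * r ∧ lo * γ ^ 2 ≤ γ * (x * r) := by
  have hloR := mul_le_mul hx hr hγ (hlo.le.trans hx)
  exact ⟨mul_nonneg (hlo.le.trans hx) (hγ.trans hr),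
    by nlinarith [mul_le_mul_of_nonneg_left hloR hγ]⟩

theorem Qseq_succ (β γ : ℝ) {k : ℕ} (R : Fin k → ℝ → ℝ) (Q₀ : ℝ → ℝ) (a : ℕ → Fin k) (m : ℕ) :
    Qseq β γ R Q₀ a (m + 1) = fun x => mobius β γ (x * R (a m) x * Qseq β γ R Q₀ a m x) := by
  funext x
  simp only [Qseq, mobius, mul_assoc]

/-- Let `(β,γ)` be antiferromagnetic and `I = [lo, hi]` a closed bounded
interval of positive reals.  Let `R₁,…,R_k` and `Q₀` be twice continuously differentiable
functions from `I` into `(γ, 1/β)` (encoded by `γ < f λ` and `β·f λ < 1`, which interprets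
`1/β = +∞` for `β = 0`).  Then there are bounded intervals `I₁ = [c₁, d₁]` and `I₂ = [c₂, d₂]`,
independent of `m` and of the sequence `a`, such that every `Q_m` is twice continuously
differentiable on `I` with first derivative in `I₁` and second derivative in `I₂` on `I`. -/
theorem Qseq_uniform_derivative_bounds (β γ : ℝ) (hanti : Antiferro β γ)
    (lo hi : ℝ) (hlo : 0 < lo) (hlohi : lo < hi) (k : ℕ) (R : Fin k → ℝ → ℝ) (Q₀ : ℝ → ℝ)
    (hR : ∀ i, ContDiffOn ℝ 2 (R i) (Set.Icc lo hi))
    (hRrange : ∀ i, ∀ lam ∈ Set.Icc lo hi, γ < R i lam ∧ β * R i lam < 1)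
    (hQ₀ : ContDiffOn ℝ 2 Q₀ (Set.Icc lo hi))
    (hQ₀range : ∀ lam ∈ Set.Icc lo hi, γ < Q₀ lam ∧ β * Q₀ lam < 1) :
    ∃ c₁ d₁ c₂ d₂ : ℝ, ∀ (a : ℕ → Fin k) (m : ℕ),
      ContDiffOn ℝ 2 (Qseq β γ R Q₀ a m) (Set.Icc lo hi) ∧
      ∀ lam ∈ Set.Icc lo hi,
        derivWithin (Qseq β γ R Q₀ a m) (Set.Icc lo hi) lam ∈ Set.Icc c₁ d₁ ∧
        derivWithin (derivWithin (Qseq β γ R Q₀ a m) (Set.Icc lo hi)) (Set.Icc lo hi) lam ∈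
          Set.Icc c₂ d₂ := by
  obtain ⟨hβ, hγ, hβγ, hβγ0⟩ := hanti
  have hS : UniqueDiffOn ℝ (Icc lo hi) := uniqueDiffOn_Icc hlohi
  have hp (i : Fin k) : ContDiffOn ℝ 2 (fun x => x * R i x) (Icc lo hi) := contDiffOn_id.mul (hR i)
  obtain ⟨C, hC⟩ := isCompact_Icc.exists_bound_of_contDiffOn_two hS hp
  obtain ⟨C₀, hC₀⟩ := isCompact_Icc.exists_bound_of_contDiffOn_two hS fun _ : Unit => hQ₀
  obtain ⟨x₀, hx₀, hmin⟩ :=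
    isCompact_Icc.exists_isMinOn (nonempty_Icc.2 hlohi.le) hQ₀.continuousOn
  -- every `x * R i x * Q x` below is at least `σ = lo * γ ^ 2`
  have hσ : 0 < β + lo * γ ^ 2 ∧ 0 < β + γ * (lo * γ ^ 2) ^ 2 := by
    rcases hβγ0 with hβ0 | hγ0
    · have := hβ.lt_of_ne' hβ0; constructor <;> positivity
    · have := hγ.lt_of_ne' hγ0; constructor <;> positivity
  obtain ⟨B, M₁, M₂, hB, hM₁, hM₀₁, hM₂, hM₀₂, hstep⟩ :=
    exists_derivRelBounded_mobius_mul_invariant hS hβ hγ hβγ (by positivity) hσ.1 hσ.2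
      C C₀ (C₀ / Q₀ x₀)
  have hbound (a : ℕ → Fin k) (m : ℕ) :
      DerivRelBounded (Icc lo hi) γ B M₁ M₂ (Qseq β γ R Q₀ a m) := by
    induction m with
    | zero =>
      exact .of_abs_le hQ₀ (hγ.trans_lt (hQ₀range x₀ hx₀).1)
        (fun x hx => ⟨(hQ₀range x hx).1.le, hmin hx⟩) (hC₀ ()) hB hM₀₁ hM₀₂
    | succ m ih =>
      refine Qseq_succ β γ R Q₀ a m ▸ hstep _ _ (hp (a m)) (fun x hx => ?_) ih
      obtain ⟨h₀, h₁, h₂⟩ := hC (a m) x hx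
      obtain ⟨hp₀, hσp⟩ := mul_nonneg_and_sq_le hlo hx.1 hγ (hRrange (a m) x hx).1.le
      exact ⟨hp₀, hσp, (le_abs_self _).trans h₀, h₁, h₂⟩
  exact ⟨_, _, _, _, fun a m =>
    ⟨(hbound a m).1, fun x hx => (hbound a m).derivWithin_mem_Icc hM₁ hM₂ hx⟩⟩
end

section
/- Let (β,γ) be antiferromagnetic and λ, λ₁, λ₂ > 0. Let G = (V,E) be a finite graph and S ⊆ V. For i ∈ {1,2}, let μ_i be the probability distribution on configurations σ : V → {0,1} in which σ has probability proportional to β^{m₀(σ)} γ^{m₁(σ)} · ∏_{v ∈ V : σ(v)=1} λ_v, where λ_v = λ_i for v ∈ S and λ_v = λ for v ∈ V \ S. Then for every vertex v ∈ V, |E_{σ∼μ₂}[σ(v)] − E_{σ∼μ₁}[σ(v)]| ≤ 2·|S|·|λ₂/λ₁ − 1|. -/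
open Finset

attribute [local instance] Classical.propDecidable

noncomputable section

/-- The Gibbs weight of `σ` with a vertex-dependent field vector `ℓ`:
`β^{m₀(σ)} γ^{m₁(σ)} ∏_{v : σ(v)=1} ℓ v`. -/
def gWeightField {V : Type*} [Fintype V] [DecidableEq V] (G : SimpleGraph V) (β γ : ℝ)
    (ℓ : V → ℝ) (σ : V → Bool) : ℝ :=
  (∏ v ∈ Finset.univ.filter fun v => σ v = true, ℓ v) *
    β ^ monoCount G false σ * γ ^ monoCount G true σ

/-- The expectation `E_{σ∼μ}[σ(v)]` under the Gibbs distribution with field vector `ℓ`. -/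
def spinExp {V : Type*} [Fintype V] [DecidableEq V] (G : SimpleGraph V) (β γ : ℝ)
    (ℓ : V → ℝ) (v : V) : ℝ :=
  (∑ σ : V → Bool, if σ v = true then gWeightField G β γ ℓ σ else 0) /
    ∑ σ : V → Bool, gWeightField G β γ ℓ σ

lemma pow_sub_one_le' (r : ℝ) (hr : 1 ≤ r) (m : ℕ) : r ^ m - 1 ≤ m * (r - 1) * r ^ m := by
  induction m with
  | zero => simp
  | succ m ih =>
    have h1 : (1:ℝ) ≤ r ^ m := one_le_pow₀ hr
    have h2 : (1:ℝ) ≤ r ^ (m+1) := one_le_pow₀ hr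
    have h3 : r ^ (m+1) - r ≤ m * (r - 1) * r ^ (m+1) := by
      have := mul_le_mul_of_nonneg_left ih (le_trans zero_le_one hr)
      calc r ^ (m+1) - r = r * (r ^ m - 1) := by ring
        _ ≤ r * (m * (r-1) * r ^ m) := this
        _ = m * (r - 1) * r ^ (m+1) := by ring
    have h4 : r - 1 ≤ (r - 1) * r ^ (m+1) := by nlinarith
    have h5 : ((m:ℝ)+1) * (r - 1) * r ^ (m+1) = m * (r-1) * r^(m+1) + (r-1)*r^(m+1) := by ring
    push_cast
    linarith

lemma pow_diff_bound (r : ℝ) (hr : 0 < r) (n a b : ℕ) (ha : a ≤ n) (hb : b ≤ n) :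
    |r ^ a - r ^ b| ≤ n * |r - 1| * (r ^ a + r ^ b) := by
  -- WLOG b ≤ a
  wlog hab : b ≤ a generalizing a b
  · rw [abs_sub_comm, add_comm]
    exact this b a hb ha (le_of_not_ge hab)
  obtain ⟨m, rfl⟩ := Nat.exists_eq_add_of_le hab
  have hmn : (m:ℝ) ≤ (n:ℝ) := by exact_mod_cast le_trans (Nat.le_add_left m b) ha
  have hbpos : (0:ℝ) < r ^ b := pow_pos hr b
  have hb2 : (0:ℝ) < r ^ (b+m) := pow_pos hr _
  rcases le_total 1 r with hr1 | hr1
  · have hle : r ^ b ≤ r ^ (b+m) := pow_le_pow_right₀ hr1 (Nat.le_add_right b m)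
    rw [abs_of_nonneg (by linarith), abs_of_nonneg (by linarith : (0:ℝ) ≤ r - 1)]
    have key : r ^ m - 1 ≤ m * (r - 1) * r ^ m := pow_sub_one_le' r hr1 m
    have h1 : r ^ (b+m) - r ^ b = r ^ b * (r ^ m - 1) := by ring
    have h2 : r ^ b * (r ^ m - 1) ≤ r ^ b * (m * (r-1) * r ^ m) :=
      mul_le_mul_of_nonneg_left key hbpos.le
    have h3 : r ^ b * (m * (r-1) * r ^ m) = m * (r-1) * r ^ (b+m) := by ring
    nlinarith [mul_nonneg (mul_nonneg (mul_nonneg (Nat.cast_nonneg n : (0:ℝ) ≤ n) (by linarith : (0:ℝ) ≤ r - 1)) hbpos.le) (le_of_lt hbpos), mul_le_mul_of_nonneg_left hmn (mul_nonneg (by linarith : (0:ℝ) ≤ r - 1) hb2.le)]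
  · have hle : r ^ (b+m) ≤ r ^ b := pow_le_pow_of_le_one hr.le hr1 (Nat.le_add_right b m)
    rw [abs_of_nonpos (by linarith), abs_of_nonpos (by linarith : r - 1 ≤ 0)]
    have key : 1 - r ^ m ≤ m * (1 - r) := by
      have h := one_add_mul_le_pow (show (-2:ℝ) ≤ r - 1 by linarith) m
      rw [show (1:ℝ) + (r-1) = r by ring] at h
      linarith
    have h2 : r ^ b * (1 - r ^ m) ≤ r ^ b * (m * (1-r)) :=
      mul_le_mul_of_nonneg_left key hbpos.le
    have h1 : r ^ b - r ^ (b+m) = r ^ b * (1 - r ^ m) := by ring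
    nlinarith [mul_le_mul_of_nonneg_left hmn (mul_nonneg (by linarith : (0:ℝ) ≤ 1 - r) hbpos.le), mul_nonneg (mul_nonneg (mul_nonneg (Nat.cast_nonneg n : (0:ℝ) ≤ n) (by linarith : (0:ℝ) ≤ 1 - r)) hbpos.le) hb2.le]

/-- Let `(β,γ)` be antiferromagnetic and `λ, λ₁, λ₂ > 0`.  Let `G` be a
finite graph, `S` a set of its vertices, and for `i ∈ {1,2}` let `μᵢ` be the Gibbs
distribution in which vertices of `S` carry field `λᵢ` and all other vertices carry field
`λ`.  Then for every vertex `v`,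
`|E_{σ∼μ₂}[σ(v)] − E_{σ∼μ₁}[σ(v)]| ≤ 2|S|·|λ₂/λ₁ − 1|`. -/
theorem field_perturbation (V : Type*) [Fintype V] [DecidableEq V] (G : SimpleGraph V)
    (β γ lam lam₁ lam₂ : ℝ) (hanti : Antiferro β γ) (hlam : 0 < lam) (hlam₁ : 0 < lam₁)
    (hlam₂ : 0 < lam₂) (S : Finset V) (v : V) :
    |spinExp G β γ (fun u => if u ∈ S then lam₂ else lam) v -
        spinExp G β γ (fun u => if u ∈ S then lam₁ else lam) v| ≤
      2 * S.card * |lam₂ / lam₁ - 1| := by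
  classical
  set ℓ₁ : V → ℝ := fun u => if u ∈ S then lam₁ else lam with hℓ₁def
  set ℓ₂ : V → ℝ := fun u => if u ∈ S then lam₂ else lam with hℓ₂def
  set r : ℝ := lam₂ / lam₁ with hrdef
  have hrpos : 0 < r := div_pos hlam₂ hlam₁
  set n : ℕ := S.card with hndef
  set w : (V → Bool) → ℝ := gWeightField G β γ ℓ₁ with hwdef
  set k : (V → Bool) → ℕ :=
    fun σ => ((Finset.univ.filter fun u => σ u = true).filter fun u => u ∈ S).card with hkdef
  have hkle : ∀ σ, k σ ≤ n := by
    intro σ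
    exact Finset.card_le_card fun x hx => (Finset.mem_filter.mp hx).2
  -- weight with field ℓ₂
  have hw2 : ∀ σ, gWeightField G β γ ℓ₂ σ = r ^ k σ * w σ := by
    intro σ
    have h1 : ∀ u, ℓ₂ u = (if u ∈ S then r else 1) * ℓ₁ u := by
      intro u
      by_cases h : u ∈ S
      · simp only [hℓ₁def, hℓ₂def, h, if_true, hrdef]
        field_simp
      · simp [hℓ₁def, hℓ₂def, h]
    simp only [hwdef, gWeightField]
    rw [Finset.prod_congr rfl fun u _ => h1 u, Finset.prod_mul_distrib,
      ← Finset.prod_filter, Finset.prod_const]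
    ring
  -- positivity facts
  have hℓ₁pos : ∀ u, 0 < ℓ₁ u := by
    intro u; by_cases h : u ∈ S <;> simp [hℓ₁def, h, hlam₁, hlam]
  have hwnn : ∀ σ, 0 ≤ w σ := by
    intro σ
    refine mul_nonneg (mul_nonneg ?_ (pow_nonneg hanti.1 _)) (pow_nonneg hanti.2.1 _)
    exact Finset.prod_nonneg fun u _ => (hℓ₁pos u).le
  obtain ⟨σ₀, hσ₀⟩ : ∃ σ, 0 < w σ := by
    rcases hanti.2.2.2 with hβ | hγ
    · refine ⟨fun _ => false, ?_⟩
      have hm : monoCount G true (fun _ => false) = 0 := by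
        rw [monoCount, Finset.card_eq_zero, Finset.filter_eq_empty_iff]
        intro e _
        induction e using Sym2.ind with
        | _ x y =>
          intro h
          simpa using h x (Sym2.mem_mk_left x y)
      have hβpos : 0 < β := lt_of_le_of_ne hanti.1 (Ne.symm hβ)
      simp only [hwdef, gWeightField, hm]
      have : (Finset.univ.filter fun u => (fun _ => false) u = true) = (∅ : Finset V) := by
        simp
      rw [this]
      simp only [Finset.prod_empty, pow_zero, one_mul, mul_one]
      exact pow_pos hβpos _
    · refine ⟨fun _ => true, ?_⟩
      have hm : monoCount G false (fun _ => true) = 0 := by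
        rw [monoCount, Finset.card_eq_zero, Finset.filter_eq_empty_iff]
        intro e _
        induction e using Sym2.ind with
        | _ x y =>
          intro h
          simpa using h x (Sym2.mem_mk_left x y)
      have hγpos : 0 < γ := lt_of_le_of_ne hanti.2.1 (Ne.symm hγ)
      simp only [hwdef, gWeightField, hm, pow_zero, mul_one, one_mul]
      exact mul_pos (Finset.prod_pos fun u _ => hℓ₁pos u) (pow_pos hγpos _)
  set Z1 : ℝ := ∑ σ : V → Bool, w σ with hZ1def
  set Z2 : ℝ := ∑ σ : V → Bool, r ^ k σ * w σ with hZ2def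
  have hZ1 : 0 < Z1 :=
    Finset.sum_pos' (fun σ _ => hwnn σ) ⟨σ₀, Finset.mem_univ _, hσ₀⟩
  have hZ2 : 0 < Z2 :=
    Finset.sum_pos' (fun σ _ => mul_nonneg (pow_nonneg hrpos.le _) (hwnn σ))
      ⟨σ₀, Finset.mem_univ _, mul_pos (pow_pos hrpos _) hσ₀⟩
  set e : (V → Bool) → ℝ := fun σ => if σ v = true then 1 else 0 with hedef
  have he0 : ∀ σ, 0 ≤ e σ := by intro σ; simp only [hedef]; positivity
  have he1 : ∀ σ, e σ ≤ 1 := by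
    intro σ; simp only [hedef]; split <;> norm_num
  set A1 : ℝ := ∑ σ : V → Bool, e σ * w σ with hA1def
  set A2 : ℝ := ∑ σ : V → Bool, e σ * (r ^ k σ * w σ) with hA2def
  have hsp1 : spinExp G β γ ℓ₁ v = A1 / Z1 := by
    rw [spinExp, hA1def, hZ1def]
    congr 1
    refine Finset.sum_congr rfl fun σ _ => ?_
    by_cases h : σ v = true <;> simp [hedef, h, hwdef]
  have hsp2 : spinExp G β γ ℓ₂ v = A2 / Z2 := by
    rw [spinExp, hA2def, hZ2def]
    congr 1
    · refine Finset.sum_congr rfl fun σ _ => ?_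
      by_cases h : σ v = true <;> simp [hedef, h, hw2 σ]
    · exact Finset.sum_congr rfl fun σ _ => hw2 σ
  rw [hsp1, hsp2, div_sub_div _ _ hZ2.ne' hZ1.ne', abs_div,
    abs_of_pos (mul_pos hZ2 hZ1), div_le_iff₀ (mul_pos hZ2 hZ1)]
  -- expand the numerator as a double sum
  have hD : A2 * Z1 - Z2 * A1 =
      ∑ σ : V → Bool, ∑ τ : V → Bool,
        e σ * w σ * w τ * (r ^ k σ - r ^ k τ) := by
    rw [mul_comm Z2 A1, hA2def, hZ1def, hZ2def, hA1def, Finset.sum_mul_sum,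
      Finset.sum_mul_sum, ← Finset.sum_sub_distrib]
    refine Finset.sum_congr rfl fun σ _ => ?_
    rw [← Finset.sum_sub_distrib]
    refine Finset.sum_congr rfl fun τ _ => ?_
    ring
  rw [hD]
  have hterm : ∀ σ τ : V → Bool,
      |e σ * w σ * w τ * (r ^ k σ - r ^ k τ)| ≤
        n * |r - 1| * (r ^ k σ * w σ * w τ + r ^ k τ * w σ * w τ) := by
    intro σ τ
    have hb := pow_diff_bound r hrpos n (k σ) (k τ) (hkle σ) (hkle τ)
    have hww : (0:ℝ) ≤ w σ * w τ := mul_nonneg (hwnn σ) (hwnn τ)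
    have h2 : e σ * w σ * w τ ≤ w σ * w τ := by
      nlinarith [he1 σ, he0 σ]
    calc |e σ * w σ * w τ * (r ^ k σ - r ^ k τ)|
        = e σ * w σ * w τ * |r ^ k σ - r ^ k τ| := by
          rw [abs_mul, abs_of_nonneg (mul_nonneg (mul_nonneg (he0 σ) (hwnn σ)) (hwnn τ))]
      _ ≤ (w σ * w τ) * (n * |r - 1| * (r ^ k σ + r ^ k τ)) := by
          apply mul_le_mul h2 hb (abs_nonneg _) hww
      _ = n * |r - 1| * (r ^ k σ * w σ * w τ + r ^ k τ * w σ * w τ) := by ring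
  have habs : |∑ σ : V → Bool, ∑ τ : V → Bool,
      e σ * w σ * w τ * (r ^ k σ - r ^ k τ)| ≤
      ∑ σ : V → Bool, ∑ τ : V → Bool,
        n * |r - 1| * (r ^ k σ * w σ * w τ + r ^ k τ * w σ * w τ) := by
    refine (Finset.abs_sum_le_sum_abs _ _).trans ?_
    refine Finset.sum_le_sum fun σ _ => ?_
    refine (Finset.abs_sum_le_sum_abs _ _).trans ?_
    exact Finset.sum_le_sum fun τ _ => hterm σ τ
  refine habs.trans (le_of_eq ?_)
  have hsum1 : ∑ σ : V → Bool, ∑ τ : V → Bool, r ^ k σ * w σ * w τ = Z2 * Z1 := by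
    rw [hZ2def, hZ1def, Finset.sum_mul_sum]
  have hsum2 : ∑ σ : V → Bool, ∑ τ : V → Bool, r ^ k τ * w σ * w τ = Z1 * Z2 := by
    rw [hZ1def, hZ2def, Finset.sum_mul_sum]
    exact Finset.sum_congr rfl fun σ _ => Finset.sum_congr rfl fun τ _ => by ring
  calc ∑ σ : V → Bool, ∑ τ : V → Bool,
        n * |r - 1| * (r ^ k σ * w σ * w τ + r ^ k τ * w σ * w τ)
      = n * |r - 1| * ((∑ σ : V → Bool, ∑ τ : V → Bool, r ^ k σ * w σ * w τ) +
          ∑ σ : V → Bool, ∑ τ : V → Bool, r ^ k τ * w σ * w τ) := by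
        simp only [Finset.mul_sum, Finset.sum_add_distrib, mul_add]
      _ = n * |r - 1| * (Z2 * Z1 + Z1 * Z2) := by rw [hsum1, hsum2]
      _ = 2 * n * |r - 1| * (Z2 * Z1) := by ring

end
end

section
/- Consider the hard-core model at fugacity 1, i.e., the uniform distribution over independent sets. Let T₁ be the path on vertices {ρ₁, a, b} with edges {ρ₁,a}, {a,b}, rooted at ρ₁, and let T₂ be the tree on vertices {ρ₂, a, b, c, d, e, f, g} with edges {ρ₂,a}, {a,b}, {a,c}, {b,d}, {c,e}, {c,f}, {f,g}, rooted at ρ₂. Then T₁ and T₂ have equal effective fields, R_{T₁} = R_{T₂} = 2/3, but different magnetization gaps: M_{T₁} = 5/6 and M_{T₂} = 3/4. -/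
open Finset

attribute [local instance] Classical.propDecidable

noncomputable section

/-- The path `T₁` on vertices `{ρ₁, a, b} = {0, 1, 2}` with edges `{ρ₁,a}, {a,b}`,
rooted at `ρ₁ = 0`. -/
def treeT₁ : SimpleGraph (Fin 3) :=
  SimpleGraph.fromEdgeSet {s(0, 1), s(1, 2)}

/-- The tree `T₂` on vertices `{ρ₂, a, b, c, d, e, f, g} = {0,…,7}` with edges
`{ρ₂,a}, {a,b}, {a,c}, {b,d}, {c,e}, {c,f}, {f,g}`, rooted at `ρ₂ = 0`. -/
def treeT₂ : SimpleGraph (Fin 8) :=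
  SimpleGraph.fromEdgeSet {s(0, 1), s(1, 2), s(1, 3), s(2, 4), s(3, 5), s(3, 6), s(6, 7)}

/-!
With `β = 1`, `γ = 0`, `λ = 1` the Gibbs weight of `σ` is `0 ^ m₁(σ)`, the indicator that
`σ⁻¹(1)` is an independent set. Hence `R_T` is the ratio of the numbers of independent sets
containing and avoiding the root, and `E[|σ| | σ(ρ) = b]` is the average size of those sets.
For `T₁` there are `2` and `3` of them, of total sizes `3` and `2`; for `T₂` there are `24` and
`36`, of total sizes `70` and `78`. These counts are checked by evaluation.
-/

open SimpleGraph

section HardCore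

variable {V : Type*} (G : SimpleGraph V)

theorem isIndepSet_setOf_iff_forall_edge (σ : V → Bool) :
    G.IsIndepSet {v | σ v = true} ↔ ∀ e ∈ G.edgeSet, ∃ v ∈ e, σ v = false := by
  rw [← isVertexCover_compl]
  constructor
  · rintro h ⟨v, w⟩ hvw
    simpa [Sym2.mem_iff] using h hvw
  · intro h v w hvw
    simpa [Sym2.mem_iff] using h s(v, w) hvw

variable [Fintype V] [DecidableEq V]

theorem monoCount_true_eq_zero_iff (σ : V → Bool) :
    monoCount G true σ = 0 ↔ G.IsIndepSet {v | σ v = true} := by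
  simp [monoCount, isIndepSet_setOf_iff_forall_edge, filter_eq_empty_iff]

theorem gWeight_one_zero_one (σ : V → Bool) :
    gWeight G 1 0 1 σ = if G.IsIndepSet {v | σ v = true} then 1 else 0 := by
  simp only [gWeight, one_pow, one_mul, ← monoCount_true_eq_zero_iff]
  split_ifs with h
  · rw [h, pow_zero]
  · exact zero_pow h

def indepConfs (ρ : V) (b : Bool) : Finset (V → Bool) :=
  {σ | σ ρ = b ∧ G.IsIndepSet {v | σ v = true}}

theorem Zcond_one_zero_one (ρ : V) (b : Bool) :
    Zcond G 1 0 1 ρ b = #(indepConfs G ρ b) := by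
  simp [Zcond, gWeight_one_zero_one, indepConfs, ← ite_and, sum_boole]

theorem effField_one_zero_one (ρ : V) :
    effField G 1 0 1 ρ = #(indepConfs G ρ true) / #(indepConfs G ρ false) := by
  rw [effField, Zcond_one_zero_one, Zcond_one_zero_one, one_mul]

theorem condMag_one_zero_one (ρ : V) (b : Bool) :
    condMag G 1 0 1 ρ b =
      (∑ σ ∈ indepConfs G ρ b, confOnes σ : ℕ) / #(indepConfs G ρ b) := by
  simp [condMag, Zcond_one_zero_one, gWeight_one_zero_one, indepConfs, ← ite_and, sum_filter]

end HardCore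

theorem treeT₁_isIndepSet_iff (σ : Fin 3 → Bool) :
    treeT₁.IsIndepSet {v | σ v = true} ↔
      (σ 0 = false ∨ σ 1 = false) ∧ (σ 1 = false ∨ σ 2 = false) := by
  simp [isIndepSet_setOf_iff_forall_edge, treeT₁, edgeSet_fromEdgeSet, or_imp, forall_and]

theorem treeT₂_isIndepSet_iff (σ : Fin 8 → Bool) :
    treeT₂.IsIndepSet {v | σ v = true} ↔
      (σ 0 = false ∨ σ 1 = false) ∧ (σ 1 = false ∨ σ 2 = false) ∧ (σ 1 = false ∨ σ 3 = false) ∧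
      (σ 2 = false ∨ σ 4 = false) ∧ (σ 3 = false ∨ σ 5 = false) ∧ (σ 3 = false ∨ σ 6 = false) ∧
      (σ 6 = false ∨ σ 7 = false) := by
  simp [isIndepSet_setOf_iff_forall_edge, treeT₂, edgeSet_fromEdgeSet, or_imp, forall_and]

theorem card_indepConfs_treeT₁ :
    #(indepConfs treeT₁ 0 true) = 2 ∧ #(indepConfs treeT₁ 0 false) = 3 := by
  simp only [indepConfs, treeT₁_isIndepSet_iff]
  decide

theorem sum_confOnes_indepConfs_treeT₁ :
    ∑ σ ∈ indepConfs treeT₁ 0 true, confOnes σ = 3 ∧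
      ∑ σ ∈ indepConfs treeT₁ 0 false, confOnes σ = 2 := by
  simp only [indepConfs, treeT₁_isIndepSet_iff]
  decide

theorem card_indepConfs_treeT₂ :
    #(indepConfs treeT₂ 0 true) = 24 ∧ #(indepConfs treeT₂ 0 false) = 36 := by
  simp only [indepConfs, treeT₂_isIndepSet_iff]
  decide

theorem sum_confOnes_indepConfs_treeT₂ :
    ∑ σ ∈ indepConfs treeT₂ 0 true, confOnes σ = 70 ∧
      ∑ σ ∈ indepConfs treeT₂ 0 false, confOnes σ = 78 := by
  simp only [indepConfs, treeT₂_isIndepSet_iff]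
  decide

/-- For the hard-core model at fugacity `1` (the uniform distribution over
independent sets, i.e. the Gibbs distribution with `β = 1`, `γ = 0`, `λ = 1`), the trees `T₁`
and `T₂` above have equal effective fields, `R_{T₁} = R_{T₂} = 2/3`, but different
magnetization gaps: `M_{T₁} = 5/6` and `M_{T₂} = 3/4`. -/
theorem hardcore_example :
    effField treeT₁ 1 0 1 0 = 2 / 3 ∧ effField treeT₂ 1 0 1 0 = 2 / 3 ∧
    magGap treeT₁ 1 0 1 0 = 5 / 6 ∧ magGap treeT₂ 1 0 1 0 = 3 / 4 := by
  obtain ⟨card₁_true, card₁_false⟩ := card_indepConfs_treeT₁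
  obtain ⟨card₂_true, card₂_false⟩ := card_indepConfs_treeT₂
  obtain ⟨size₁_true, size₁_false⟩ := sum_confOnes_indepConfs_treeT₁
  obtain ⟨size₂_true, size₂_false⟩ := sum_confOnes_indepConfs_treeT₂
  simp only [effField_one_zero_one, magGap, condMag_one_zero_one, card₁_true, card₁_false,
    card₂_true, card₂_false, size₁_true, size₁_false, size₂_true, size₂_false]
  norm_num

end
end
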